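/- arXiv:2101.12707 — 5 statements merged into one kernel-verified Lean document; each statement's English description precedes it below -/
import Mathlib

section
/- Let α be an irrational real number. The sequence of partial quotients of the regular continued fraction expansion of α is eventually periodic if and only if α is a quadratic irrationality, i.e., α is a root of a polynomial of degree 2 with integer coefficients (equivalently, α = (a + b√c)/d for integers a, b, c, d with b ≠ 0, c > 1 square-free, d > 0). -/
namespace CFLag

def lagP (c : ℕ → ℤ) : ℕ → ℤ
  | 0 => 0
  | 1 => 1
  | (n+2) => c n * lagP c (n+1) + lagP c n

def lagQ (c : ℕ → ℤ) : ℕ → ℤ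
  | 0 => 1
  | 1 => 0
  | (n+2) => c n * lagQ c (n+1) + lagQ c n

lemma lagP_zero (c : ℕ → ℤ) : lagP c 0 = 0 := rfl
lemma lagP_one (c : ℕ → ℤ) : lagP c 1 = 1 := rfl
lemma lagP_add_two (c : ℕ → ℤ) (n : ℕ) :
    lagP c (n+2) = c n * lagP c (n+1) + lagP c n := rfl
lemma lagQ_zero (c : ℕ → ℤ) : lagQ c 0 = 1 := rfl
lemma lagQ_one (c : ℕ → ℤ) : lagQ c 1 = 0 := rfl
lemma lagQ_add_two (c : ℕ → ℤ) (n : ℕ) :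
    lagQ c (n+2) = c n * lagQ c (n+1) + lagQ c n := rfl

variable {c : ℕ → ℤ}

lemma lagQ_pos (hc : ∀ n, 1 ≤ c (n+1)) : ∀ n, 1 ≤ lagQ c (n+2) ∧ 1 ≤ lagQ c (n+3) := by
  intro n
  induction n with
  | zero =>
    constructor
    · simp [lagQ_add_two, lagQ_zero, lagQ_one]
    · have h1 := hc 0
      simp [lagQ_add_two, lagQ_zero, lagQ_one]
      nlinarith [hc 0]
  | succ n ih =>
    refine ⟨ih.2, ?_⟩
    rw [show n+1+3 = (n+2)+2 by ring, lagQ_add_two]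
    nlinarith [hc (n+1), ih.1, ih.2]

lemma lagQ_nonneg (hc : ∀ n, 1 ≤ c (n+1)) : ∀ n, 0 ≤ lagQ c n := by
  intro n
  match n with
  | 0 => simp [lagQ_zero]
  | 1 => simp [lagQ_one]
  | (n+2) => linarith [(lagQ_pos hc n).1]

lemma lagQ_mono (hc : ∀ n, 1 ≤ c (n+1)) : ∀ n, lagQ c (n+2) ≤ lagQ c (n+3) := by
  intro n
  have h := lagQ_add_two c (n+1)
  rw [show n+1+2 = n+3 by ring] at h
  nlinarith [hc n, (lagQ_pos hc n).1, lagQ_nonneg hc (n+1), hc (n+1)]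

lemma lagQ_mono' (hc : ∀ n, 1 ≤ c (n+1)) {m n : ℕ} (h2 : 2 ≤ m) (hmn : m ≤ n) :
    lagQ c m ≤ lagQ c n := by
  induction n, hmn using Nat.le_induction with
  | base => exact le_refl _
  | succ n hn ih =>
    refine le_trans ih ?_
    obtain ⟨k, rfl⟩ := Nat.exists_eq_add_of_le (le_trans h2 hn)
    rw [show 2 + k = k + 2 by ring] at *
    exact lagQ_mono hc k

lemma lagQ_growth (hc : ∀ n, 1 ≤ c (n+1)) : ∀ n : ℕ, (n : ℤ) ≤ 2 * lagQ c (n+2) ∧ (n : ℤ) + 1 ≤ 2 * lagQ c (n+3) := by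
  intro n
  induction n with
  | zero =>
    have h1 := (lagQ_pos hc 0).1
    have h2 := (lagQ_pos hc 0).2
    norm_num at h1 h2 ⊢
    omega
  | succ n ih =>
    refine ⟨by push_cast; linarith [ih.2], ?_⟩
    rw [show n+1+3 = (n+2)+2 by ring, lagQ_add_two]
    have h1 := hc (n+1)
    have h2 := (lagQ_pos hc n).1
    have h3 := (lagQ_pos hc (n+1)).1
    have h4 := ih.2
    push_cast
    nlinarith

lemma lagP_pos (hc : ∀ n, 1 ≤ c n) : ∀ n, 0 ≤ lagP c n ∧ 1 ≤ lagP c (n+1) := by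
  intro n
  induction n with
  | zero => exact ⟨le_refl 0, le_refl 1⟩
  | succ n ih =>
    refine ⟨by linarith [ih.2], ?_⟩
    rw [lagP_add_two]
    nlinarith [hc n, ih.1, ih.2]

lemma lagdet (c : ℕ → ℤ) : ∀ n, lagP c (n+1) * lagQ c n - lagP c n * lagQ c (n+1) = (-1)^n := by
  intro n
  induction n with
  | zero => simp [lagP_zero, lagP_one, lagQ_zero, lagQ_one]
  | succ n ih =>
    rw [lagP_add_two, lagQ_add_two, pow_succ]
    ring_nf
    ring_nf at ih
    linarith [ih]


section Real

variable {c : ℕ → ℤ} {b : ℕ → ℝ}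

lemma lag_identity (hb : ∀ n, b n = c n + (b (n+1))⁻¹) (hb1 : ∀ n, 1 < b (n+1)) :
    ∀ n, b 0 * ((lagQ c (n+1) : ℝ) * b n + (lagQ c n : ℝ))
        = (lagP c (n+1) : ℝ) * b n + (lagP c n : ℝ) := by
  intro n
  induction n with
  | zero =>
    simp [lagP_zero, lagP_one, lagQ_zero, lagQ_one]
  | succ n ih =>
    have hbn1 : b (n+1) ≠ 0 := by linarith [hb1 n]
    have hbn : b n * b (n+1) = c n * b (n+1) + 1 := by
      rw [hb n]; field_simp
    rw [lagP_add_two, lagQ_add_two]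
    push_cast
    linear_combination b (n+1) * ih - (b 0 * (lagQ c (n+1) : ℝ) - (lagP c (n+1) : ℝ)) * hbn

lemma lag_den_pos (hc : ∀ n, 1 ≤ c (n+1)) (hb1 : ∀ n, 1 < b (n+1)) :
    ∀ n, 0 < (lagQ c (n+1) : ℝ) * b n + (lagQ c n : ℝ) := by
  intro n
  match n with
  | 0 => simp [lagQ_zero, lagQ_one]
  | (n+1) =>
    have h1 : (1:ℤ) ≤ lagQ c (n+2) := (lagQ_pos hc n).1
    have h2 : (0:ℤ) ≤ lagQ c (n+1) := lagQ_nonneg hc (n+1)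
    have h3 := hb1 n
    have h1' : (1:ℝ) ≤ (lagQ c (n+2) : ℝ) := by exact_mod_cast h1
    have h2' : (0:ℝ) ≤ (lagQ c (n+1) : ℝ) := by exact_mod_cast h2
    nlinarith

lemma lag_err (hb : ∀ n, b n = c n + (b (n+1))⁻¹) (hb1 : ∀ n, 1 < b (n+1)) :
    ∀ n, (b 0 * (lagQ c (n+1) : ℝ) - (lagP c (n+1) : ℝ))
          * ((lagQ c (n+1) : ℝ) * b n + (lagQ c n : ℝ)) = (-1)^(n+1) := by
  intro n
  have hid := lag_identity hb hb1 n
  have hdet := lagdet c n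
  have hdet' : (lagP c (n+1) : ℝ) * (lagQ c n : ℝ) - (lagP c n : ℝ) * (lagQ c (n+1) : ℝ)
      = (-1)^n := by exact_mod_cast hdet
  have : (-1:ℝ)^(n+1) = -((-1:ℝ)^n) := by ring
  rw [this, ← hdet']
  linear_combination (lagQ c (n+1) : ℝ) * hid

lemma lag_err_bound (hc : ∀ n, 1 ≤ c (n+1)) (hb : ∀ n, b n = c n + (b (n+1))⁻¹)
    (hb1 : ∀ n, 1 < b (n+1)) :
    ∀ n, |b 0 * (lagQ c (n+1) : ℝ) - (lagP c (n+1) : ℝ)| * (lagQ c (n+2) : ℝ) ≤ 1 := by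
  intro n
  set den : ℝ := (lagQ c (n+1) : ℝ) * b n + (lagQ c n : ℝ) with hden
  have hdenpos : 0 < den := lag_den_pos hc hb1 n
  have herr := lag_err hb hb1 n
  have habs : |b 0 * (lagQ c (n+1) : ℝ) - (lagP c (n+1) : ℝ)| * den = 1 := by
    have := congrArg abs herr
    rwa [abs_mul, abs_of_pos hdenpos, abs_pow, abs_neg, abs_one, one_pow] at this
  have hle : (lagQ c (n+2) : ℝ) ≤ den := by
    have hbc : (c n : ℝ) ≤ b n := by
      rw [hb n]
      have := hb1 n
      have : 0 < (b (n+1))⁻¹ := by positivity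
      linarith
    have hQ1 : (0:ℝ) ≤ (lagQ c (n+1) : ℝ) := by exact_mod_cast lagQ_nonneg hc (n+1)
    have : (lagQ c (n+2) : ℝ) = (c n : ℝ) * (lagQ c (n+1) : ℝ) + (lagQ c n : ℝ) := by
      rw [lagQ_add_two]; push_cast; ring
    rw [this, hden]
    nlinarith
  calc |b 0 * (lagQ c (n+1) : ℝ) - (lagP c (n+1) : ℝ)| * (lagQ c (n+2) : ℝ)
      ≤ |b 0 * (lagQ c (n+1) : ℝ) - (lagP c (n+1) : ℝ)| * den := by
        apply mul_le_mul_of_nonneg_left hle (abs_nonneg _)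
    _ = 1 := habs

end Real

lemma lag_unique (g d : ℕ → ℝ) (c : ℕ → ℤ)
    (hg : ∀ k, g k = c k + (g (k+1))⁻¹) (hd : ∀ k, d k = c k + (d (k+1))⁻¹)
    (hg1 : ∀ k, 1 < g k) (hd1 : ∀ k, 1 < d k) (hc : ∀ k, 1 ≤ c k) :
    g 0 = d 0 := by
  have hgpos : ∀ k, (0:ℝ) < g k := fun k => lt_trans one_pos (hg1 k)
  have hdpos : ∀ k, (0:ℝ) < d k := fun k => lt_trans one_pos (hd1 k)
  have hstep : ∀ k, |g k - d k| * (g (k+1) * d (k+1)) = |g (k+1) - d (k+1)| := by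
    intro k
    have h1 : g (k+1) ≠ 0 := ne_of_gt (hgpos (k+1))
    have h2 : d (k+1) ≠ 0 := ne_of_gt (hdpos (k+1))
    have : g k - d k = (d (k+1) - g (k+1)) / (g (k+1) * d (k+1)) := by
      rw [hg k, hd k]; field_simp; ring
    rw [this, abs_div, abs_of_pos (mul_pos (hgpos (k+1)) (hdpos (k+1))),
      div_mul_cancel₀ _ (ne_of_gt (mul_pos (hgpos (k+1)) (hdpos (k+1))))]
    rw [abs_sub_comm]
  have hprod2 : ∀ k, 2 < g (k+1) * g (k+2) := by
    intro k
    have h1 := hg1 (k+2)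
    have h2 := hg1 (k+1)
    have hc1 := hc (k+1)
    have hc1' : (1:ℝ) ≤ (c (k+1) : ℝ) := by exact_mod_cast hc1
    have : g (k+1) ≥ 1 + (g (k+2))⁻¹ := by
      rw [hg (k+1)]; linarith
    have hinv : (g (k+2))⁻¹ * g (k+2) = 1 := inv_mul_cancel₀ (ne_of_gt (hgpos (k+2)))
    nlinarith [hgpos (k+2)]
  have hprod2d : ∀ k, 2 < d (k+1) * d (k+2) := by
    intro k
    have h1 := hd1 (k+2)
    have hc1' : (1:ℝ) ≤ (c (k+1) : ℝ) := by exact_mod_cast hc (k+1)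
    have : d (k+1) ≥ 1 + (d (k+2))⁻¹ := by
      rw [hd (k+1)]; linarith
    have hinv : (d (k+2))⁻¹ * d (k+2) = 1 := inv_mul_cancel₀ (ne_of_gt (hdpos (k+2)))
    nlinarith [hdpos (k+2)]
  have hlt1 : ∀ k, |g k - d k| ≤ 1 := by
    intro k
    have h := hstep k
    have h1 := hg1 (k+1)
    have h2 := hd1 (k+1)
    have hnum : |g (k+1) - d (k+1)| < g (k+1) * d (k+1) := by
      rw [abs_sub_lt_iff]
      constructor <;> nlinarith
    nlinarith [abs_nonneg (g k - d k), mul_pos (hgpos (k+1)) (hdpos (k+1))]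
  have key : ∀ n k, |g k - d k| ≤ (1/2)^n := by
    intro n
    induction n with
    | zero => simpa using hlt1
    | succ n ih =>
      intro k
      have h1 := hstep k
      have h2 := hstep (k+1)
      have hgg := hprod2 k
      have hdd := hprod2d k
      have hih := ih (k+2)
      have e1 : |g k - d k| * ((g (k+1) * d (k+1)) * (g (k+2) * d (k+2))) = |g (k+2) - d (k+2)| := by
        rw [← h2, ← h1]; ring
      have hpos4 : (4:ℝ) < (g (k+1) * d (k+1)) * (g (k+2) * d (k+2)) := by
        have := mul_pos (hgpos (k+1)) (hgpos (k+2))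
        have := mul_pos (hdpos (k+1)) (hdpos (k+2))
        nlinarith [hgpos (k+1), hgpos (k+2), hdpos (k+1), hdpos (k+2)]
      have habs := abs_nonneg (g k - d k)
      have h4 : 4 * |g k - d k| ≤ |g (k+2) - d (k+2)| := by nlinarith
      have : |g k - d k| ≤ (1/2)^n / 4 := by nlinarith
      calc |g k - d k| ≤ (1/2)^n / 4 := this
        _ ≤ (1/2)^(n+1) := by rw [pow_succ]; nlinarith [pow_pos (by norm_num : (0:ℝ) < 1/2) n]
  by_contra hne
  have hpos : 0 < |g 0 - d 0| := abs_pos.mpr (sub_ne_zero.mpr hne)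
  obtain ⟨n, hn⟩ := exists_pow_lt_of_lt_one hpos (by norm_num : (1:ℝ)/2 < 1)
  exact absurd (key n 0) (not_le.mpr hn)

noncomputable def betaSeq (α : ℝ) : ℕ → ℝ
  | 0 => α
  | (n+1) => (Int.fract (betaSeq α n))⁻¹

lemma betaSeq_zero (α : ℝ) : betaSeq α 0 = α := rfl
lemma betaSeq_succ (α : ℝ) (n : ℕ) : betaSeq α (n+1) = (Int.fract (betaSeq α n))⁻¹ := rfl

section Beta

variable {α : ℝ}

lemma beta_irrational (hα : Irrational α) : ∀ n, Irrational (betaSeq α n) := by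
  intro n
  induction n with
  | zero => exact hα
  | succ n ih =>
    rw [betaSeq_succ]
    exact Irrational.inv (by rw [Int.fract]; exact (show Irrational _ from ih).sub_intCast _)

lemma beta_fract_pos (hα : Irrational α) (n : ℕ) : 0 < Int.fract (betaSeq α n) := by
  rcases lt_or_eq_of_le (Int.fract_nonneg (betaSeq α n)) with h | h
  · exact h
  · exfalso
    have hirr := (beta_irrational hα n)
    rw [Int.fract] at h
    exact ((show Irrational _ from hirr).sub_intCast ⌊betaSeq α n⌋) ⟨0, by rw [← h]; norm_num⟩

lemma beta_gt_one (hα : Irrational α) (n : ℕ) : 1 < betaSeq α (n+1) := by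
  rw [betaSeq_succ]
  exact one_lt_inv_iff₀.mpr ⟨beta_fract_pos hα n, Int.fract_lt_one _⟩

lemma beta_rec (n : ℕ) : betaSeq α n = (⌊betaSeq α n⌋ : ℝ) + (betaSeq α (n+1))⁻¹ := by
  rw [betaSeq_succ, inv_inv]
  exact (Int.floor_add_fract _).symm

lemma beta_floor_pos (hα : Irrational α) (n : ℕ) : 1 ≤ ⌊betaSeq α (n+1)⌋ :=
  Int.le_floor.mpr (by exact_mod_cast (beta_gt_one hα n).le)

lemma beta_shift (i j : ℕ) (h : betaSeq α i = betaSeq α j) :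
    ∀ k, betaSeq α (i+k) = betaSeq α (j+k) := by
  intro k
  induction k with
  | zero => simpa using h
  | succ k ih => rw [show i+(k+1) = (i+k)+1 from rfl, show j+(k+1) = (j+k)+1 from rfl,
      betaSeq_succ, betaSeq_succ, ih]

end Beta

lemma a_eq_floor {α : ℝ} (a : ℕ → ℤ) (ha0 : a 0 = ⌊α⌋)
    (ha : ∀ n : ℕ, a (n + 1) = ⌊((fun x : ℝ => Int.fract x⁻¹)^[n] (Int.fract α))⁻¹⌋) :
    ∀ n, a n = ⌊betaSeq α n⌋ := by
  have hiter : ∀ n, (fun x : ℝ => Int.fract x⁻¹)^[n] (Int.fract α) = Int.fract (betaSeq α n) := by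
    intro n
    induction n with
    | zero => simp [betaSeq_zero]
    | succ n ih =>
      rw [Function.iterate_succ_apply', ih]
      simp [betaSeq_succ]
  intro n
  match n with
  | 0 => rw [ha0, betaSeq_zero]
  | (n+1) => rw [ha n, hiter n, betaSeq_succ]

open Polynomial in
lemma dirA (α : ℝ) (hα : Irrational α) (a : ℕ → ℤ) (hfl : ∀ n, a n = ⌊betaSeq α n⌋)
    (N m : ℕ) (hm : 0 < m) (hper : ∀ i ≥ N, a (i + m) = a i) :
    ∃ P : Polynomial ℤ, P.degree = 2 ∧ Polynomial.aeval α P = 0 := by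
  set β := betaSeq α with hβ
  have hrec : ∀ n, β n = (a n : ℝ) + (β (n+1))⁻¹ := by
    intro n; rw [hfl n]; exact beta_rec n
  have hb1 : ∀ n, 1 < β (n+1) := beta_gt_one hα
  have hc : ∀ n, 1 ≤ a (n+1) := by
    intro n; rw [hfl (n+1)]; exact beta_floor_pos hα n
  -- step 1: β (N+1) = β (N+1+m)
  have huniq : β (N+1) = β (N+1+m) := by
    have := lag_unique (fun k => β (N+1+k)) (fun k => β (N+1+m+k)) (fun k => a (N+1+k))
      (fun k => hrec (N+1+k))
      (fun k => by
        have h1 := hrec (N+1+m+k)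
        have h2 : a (N+1+m+k) = a (N+1+k) := by
          have := hper (N+1+k) (by omega)
          rw [show N+1+k+m = N+1+m+k by ring] at this
          exact this
        rw [h2] at h1
        exact h1)
      (fun k => by show 1 < β (N+1+k); rw [show N+1+k = (N+k)+1 by ring]; exact hb1 (N+k))
      (fun k => by show 1 < β (N+1+m+k); rw [show N+1+m+k = (N+m+k)+1 by ring]; exact hb1 (N+m+k))
      (fun k => by show 1 ≤ a (N+1+k); rw [show N+1+k = (N+k)+1 by ring]; exact hc (N+k))
    simpa using this
  -- step 2: propagate one step to M := N+2
  set M := N + 2 with hM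
  have hMeq : β M = β (M+m) := by
    have h := beta_shift (N+1) (N+1+m) huniq 1
    rw [show N+1+1 = M by omega, show N+1+m+1 = M+m by omega] at h
    exact h
  set x := β M with hxdef
  have hx1 : 1 < x := by rw [hxdef, show M = (N+1)+1 by omega]; exact hb1 (N+1)
  -- shifted digit sequence
  set c : ℕ → ℤ := fun k => a (M + k) with hcdef
  have hc' : ∀ k, 1 ≤ c k := by
    intro k; show 1 ≤ a (M+k); rw [show M + k = (N+1+k)+1 by omega]; exact hc (N+1+k)
  have hb' : ∀ k, (fun k => β (M+k)) k = (c k : ℝ) + ((fun k => β (M+k)) (k+1))⁻¹ := by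
    intro k
    show β (M+k) = ((c k : ℝ)) + (β (M+(k+1)))⁻¹
    have := hrec (M+k)
    rwa [show M+k+1 = M+(k+1) by ring] at this
  have hb1' : ∀ k, 1 < (fun k => β (M+k)) (k+1) := by
    intro k
    show 1 < β (M+(k+1))
    rw [show M+(k+1) = (M+k)+1 by ring]
    exact hb1 (M+k)
  -- quadratic satisfied by x
  have hidm := lag_identity (c := c) (b := fun k => β (M+k)) hb' hb1' m
  rw [show M + 0 = M from rfl] at hidm
  have hxm : β (M+m) = x := hMeq.symm
  rw [hxm] at hidm
  have hquad : (lagQ c (m+1) : ℝ) * x^2 + ((lagQ c m : ℝ) - (lagP c (m+1) : ℝ)) * x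
      - (lagP c m : ℝ) = 0 := by linear_combination hidm
  -- identity relating α and x
  have hidM := lag_identity (c := a) (b := β) hrec hb1 M
  have hβ0 : β 0 = α := rfl
  rw [hβ0] at hidM
  have hxD : x * ((lagQ a (M+1) : ℝ) * α - (lagP a (M+1) : ℝ))
      = (lagP a M : ℝ) - (lagQ a M : ℝ) * α := by
    linear_combination hidM
  -- build the polynomial
  set g2 : ℤ := lagQ c (m+1) with hg2
  set g1 : ℤ := lagQ c m - lagP c (m+1) with hg1
  set g0 : ℤ := - lagP c m with hg0
  set u : Polynomial ℤ := Polynomial.C (-(lagQ a M)) * Polynomial.X + Polynomial.C (lagP a M) with hu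
  set v : Polynomial ℤ := Polynomial.C (lagQ a (M+1)) * Polynomial.X + Polynomial.C (-(lagP a (M+1))) with hv
  set H : Polynomial ℤ := Polynomial.C g2 * (u * u) + Polynomial.C g1 * (u * v) + Polynomial.C g0 * (v * v) with hH
  have hueval : ∀ r : ℝ, Polynomial.aeval r u = (lagP a M : ℝ) - (lagQ a M : ℝ) * r := by
    intro r; simp [hu]; ring
  have hveval : ∀ r : ℝ, Polynomial.aeval r v = (lagQ a (M+1) : ℝ) * r - (lagP a (M+1) : ℝ) := by
    intro r; simp [hv]; ring
  have hHeval : ∀ r : ℝ, Polynomial.aeval r H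
      = (g2:ℝ) * (Polynomial.aeval r u)^2 + (g1:ℝ) * (Polynomial.aeval r u * Polynomial.aeval r v)
        + (g0:ℝ) * (Polynomial.aeval r v)^2 := by
    intro r; simp [hH]; ring
  have haroot : Polynomial.aeval α H = 0 := by
    have heval := hHeval α
    rw [hueval, hveval] at heval
    rw [heval]
    linear_combination (norm := (simp only [hg0, hg1, hg2]; push_cast; ring1)) (((lagQ a (M+1) : ℝ) * α - (lagP a (M+1) : ℝ))^2) * hquad
      - (((g2:ℝ) * (x * ((lagQ a (M+1) : ℝ) * α - (lagP a (M+1) : ℝ))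
          + ((lagP a M : ℝ) - (lagQ a M : ℝ) * α))
          + (g1:ℝ) * ((lagQ a (M+1) : ℝ) * α - (lagP a (M+1) : ℝ)))) * hxD
  refine ⟨H, ?_, haroot⟩
  have hQM : 1 ≤ lagQ a M := (lagQ_pos hc N).1
  have hudeg : u.degree ≤ 1 := Polynomial.degree_linear_le
  have hvdeg : v.degree ≤ 1 := Polynomial.degree_linear_le
  have hterm : ∀ (g : ℤ) (p q : Polynomial ℤ), p.degree ≤ 1 → q.degree ≤ 1 →
      (Polynomial.C g * (p * q)).degree ≤ 2 := by
    intro g p q hp hq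
    refine le_trans (Polynomial.degree_mul_le _ _) ?_
    refine le_trans (add_le_add Polynomial.degree_C_le (le_trans (Polynomial.degree_mul_le _ _)
      (add_le_add hp hq))) ?_
    norm_num
  have hdle : H.degree ≤ 2 := by
    rw [hH]
    refine le_trans (Polynomial.degree_add_le _ _) ?_
    refine max_le (le_trans (Polynomial.degree_add_le _ _) (max_le ?_ ?_)) ?_
    · exact hterm g2 u u hudeg hudeg
    · exact hterm g1 u v hudeg hvdeg
    · exact hterm g0 v v hvdeg hvdeg
  have hα' : ∀ p q : ℤ, α ≠ (p:ℝ)/(q:ℝ) := fun p q => by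
    rcases eq_or_ne q 0 with hq | hq
    · rw [hq, Int.cast_zero, div_zero]; exact hα.ne_zero
    · exact (irrational_iff_ne_rational α).mp hα p q hq
  have hQMR : (0:ℝ) < (lagQ a M : ℝ) := by exact_mod_cast lt_of_lt_of_le one_pos hQM
  have hQMne : (lagQ a M : ℝ) ≠ 0 := ne_of_gt hQMR
  have hg0neg : g0 ≤ -1 := by
    rw [hg0]
    obtain ⟨m', rfl⟩ : ∃ m', m = m' + 1 := ⟨m-1, by omega⟩
    have := (lagP_pos hc' m').2
    omega
  have hg0R : (g0:ℝ) < 0 := by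
    have : (g0:ℝ) ≤ -1 := by exact_mod_cast hg0neg
    linarith
  have hH0 : H ≠ 0 := by
    intro h0
    have heval := hHeval ((lagP a M : ℝ) / (lagQ a M : ℝ))
    rw [h0] at heval
    simp only [map_zero] at heval
    rw [hueval, hveval] at heval
    have hu0 : (lagP a M : ℝ) - (lagQ a M : ℝ) * ((lagP a M : ℝ) / (lagQ a M : ℝ)) = 0 := by
      field_simp
      ring
    rw [hu0] at heval
    have hdet' : (lagP a (M+1):ℝ) * (lagQ a M:ℝ) - (lagP a M:ℝ) * (lagQ a (M+1):ℝ)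
        = (-1:ℝ)^M := by exact_mod_cast lagdet a M
    have hv0 : (lagQ a (M+1) : ℝ) * ((lagP a M : ℝ) / (lagQ a M : ℝ)) - (lagP a (M+1) : ℝ)
        = (-(-1:ℝ)^M) / (lagQ a M : ℝ) := by
      field_simp
      linear_combination -hdet'
    rw [hv0] at heval
    have hsq : ((-(-1:ℝ)^M) / (lagQ a M : ℝ))^2 = 1 / (lagQ a M : ℝ)^2 := by
      rw [div_pow, neg_sq, ← pow_mul, mul_comm M 2, pow_mul]
      norm_num
    rw [hsq] at heval
    have hpos : (0:ℝ) < 1 / (lagQ a M : ℝ)^2 := by positivity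
    nlinarith
  have hnotle1 : ¬ H.degree ≤ 1 := by
    intro hle
    have heq := Polynomial.eq_X_add_C_of_degree_le_one hle
    have hlin : (H.coeff 1 : ℝ) * α + (H.coeff 0 : ℝ) = 0 := by
      have h2 := haroot
      rw [heq] at h2
      simpa using h2
    rcases eq_or_ne (H.coeff 1) 0 with h1 | h1
    · have hc0 : (H.coeff 0 : ℝ) = 0 := by rw [h1] at hlin; simpa using hlin
      have hc0' : H.coeff 0 = 0 := by exact_mod_cast hc0
      rw [h1, hc0'] at heq
      simp only [map_zero, zero_mul, zero_add] at heq
      exact hH0 heq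
    · refine hα' (-(H.coeff 0)) (H.coeff 1) ?_
      have h1R : (H.coeff 1:ℝ) ≠ 0 := by exact_mod_cast h1
      field_simp
      push_cast
      linarith [hlin]
  have hnat2 : H.natDegree ≤ 2 := Polynomial.natDegree_le_iff_degree_le.mpr hdle
  have hnat1 : ¬ H.natDegree ≤ 1 := fun h => hnotle1 (Polynomial.natDegree_le_iff_degree_le.mp h)
  rw [Polynomial.degree_eq_natDegree hH0, show H.natDegree = 2 by omega]
  rfl

set_option maxHeartbeats 2000000 in
lemma dirB (α : ℝ) (hα : Irrational α) (a : ℕ → ℤ) (hfl : ∀ n, a n = ⌊betaSeq α n⌋)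
    (P : Polynomial ℤ) (hdeg : P.degree = 2) (hroot : Polynomial.aeval α P = 0) :
    ∃ N m : ℕ, 0 < m ∧ ∀ i ≥ N, a (i + m) = a i := by
  set β := betaSeq α with hβ
  have hrec : ∀ n, β n = (a n : ℝ) + (β (n+1))⁻¹ := by
    intro n; rw [hfl n]; exact beta_rec n
  have hb1 : ∀ n, 1 < β (n+1) := beta_gt_one hα
  have hc : ∀ n, 1 ≤ a (n+1) := by
    intro n; rw [hfl (n+1)]; exact beta_floor_pos hα n
  have hβ0 : β 0 = α := rfl
  have hα' : ∀ p q : ℤ, α ≠ (p:ℝ)/(q:ℝ) := fun p q => by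
    rcases eq_or_ne q 0 with hq | hq
    · rw [hq, Int.cast_zero, div_zero]; exact hα.ne_zero
    · exact (irrational_iff_ne_rational α).mp hα p q hq
  -- extract coefficients
  set A : ℤ := P.coeff 2 with hA
  set B : ℤ := P.coeff 1 with hB
  set C0 : ℤ := P.coeff 0 with hC0
  have hP0 : P ≠ 0 := fun h => by simp [h] at hdeg
  have hnd : P.natDegree = 2 := Polynomial.natDegree_eq_of_degree_eq_some hdeg
  have hAne : A ≠ 0 := by
    rw [hA, ← hnd]
    exact Polynomial.leadingCoeff_ne_zero.mpr hP0
  have hroot' : (A:ℝ) * α^2 + (B:ℝ) * α + (C0:ℝ) = 0 := by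
    have h := hroot
    rw [Polynomial.aeval_eq_sum_range, hnd] at h
    simp [Finset.sum_range_succ, zsmul_eq_mul] at h
    linear_combination h
  have hARne : (A:ℝ) ≠ 0 := by exact_mod_cast hAne
  -- the quadratic coefficients for each complete quotient
  set AA : ℕ → ℤ := fun n => A * (lagP a (n+1))^2 + B * (lagP a (n+1)) * (lagQ a (n+1))
      + C0 * (lagQ a (n+1))^2 with hAAdef
  set BB : ℕ → ℤ := fun n => 2*A*(lagP a (n+1))*(lagP a n)
      + B*((lagP a (n+1))*(lagQ a n) + (lagP a n)*(lagQ a (n+1)))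
      + 2*C0*(lagQ a (n+1))*(lagQ a n) with hBBdef
  set CC : ℕ → ℤ := fun n => A * (lagP a n)^2 + B * (lagP a n) * (lagQ a n)
      + C0 * (lagQ a n)^2 with hCCdef
  -- each β n is a root of its quadratic
  have hrooteq : ∀ n, (AA n : ℝ) * (β n)^2 + (BB n : ℝ) * β n + (CC n : ℝ) = 0 := by
    intro n
    have hid := lag_identity (c := a) (b := β) hrec hb1 n
    rw [hβ0] at hid
    simp only [hAAdef, hBBdef, hCCdef]
    push_cast
    linear_combination (((lagQ a (n+1):ℝ) * β n + (lagQ a n : ℝ))^2) * hroot'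
      - ((A:ℝ) * (((lagP a (n+1):ℝ) * β n + (lagP a n:ℝ))
          + α * ((lagQ a (n+1):ℝ) * β n + (lagQ a n:ℝ)))
        + (B:ℝ) * ((lagQ a (n+1):ℝ) * β n + (lagQ a n:ℝ))) * hid
  -- error bounds
  have herr : ∀ n, |α * (lagQ a (n+1) : ℝ) - (lagP a (n+1) : ℝ)| * (lagQ a (n+2) : ℝ) ≤ 1 := by
    intro n
    have := lag_err_bound hc hrec hb1 n
    rwa [hβ0] at this
  have hQcast : ∀ n, (1:ℝ) ≤ (lagQ a (n+2) : ℝ) := by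
    intro n; exact_mod_cast (lagQ_pos hc n).1
  have hQmono : ∀ {p q : ℕ}, 2 ≤ p → p ≤ q → (lagQ a p : ℝ) ≤ (lagQ a q : ℝ) := by
    intro p q h1 h2; exact_mod_cast lagQ_mono' hc h1 h2
  -- bound on AA
  set Kb : ℝ := |(A:ℝ)| + (2* |(A:ℝ)| * |α| + |(B:ℝ)|) with hKb
  set Kb2 : ℝ := 2* |(A:ℝ)| + 2*(2* |(A:ℝ)| * |α| + |(B:ℝ)|) with hKb2
  have habs2 : |2*(A:ℝ)*α + (B:ℝ)| ≤ 2* |(A:ℝ)| * |α| + |(B:ℝ)| := by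
    calc |2*(A:ℝ)*α + (B:ℝ)| ≤ |2*(A:ℝ)*α| + |(B:ℝ)| := abs_add_le _ _
      _ ≤ 2 * |(A:ℝ)| * |α| + |(B:ℝ)| := by rw [abs_mul, abs_mul, abs_two]
  have hdelta : ∀ n, 1 ≤ n → |α * (lagQ a (n+1) : ℝ) - (lagP a (n+1) : ℝ)| ≤ 1
      ∧ |α * (lagQ a (n+1) : ℝ) - (lagP a (n+1) : ℝ)| * (lagQ a (n+1) : ℝ) ≤ 1 := by
    intro n hn
    obtain ⟨k, rfl⟩ : ∃ k, n = k + 1 := ⟨n-1, by omega⟩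
    have h1 := herr (k+1)
    have h2 : (lagQ a (k+2) : ℝ) ≤ (lagQ a (k+3) : ℝ) := hQmono (by omega) (by omega)
    have h3 := hQcast k
    have h4 := hQcast (k+1)
    have habs := abs_nonneg (α * (lagQ a (k+2) : ℝ) - (lagP a (k+2) : ℝ))
    constructor
    · nlinarith
    · nlinarith
  have hQR0 : ∀ k, (0:ℝ) ≤ (lagQ a k : ℝ) := by
    intro k; exact_mod_cast lagQ_nonneg hc k
  have hAAbound : ∀ n, 1 ≤ n → |(AA n : ℝ)| ≤ Kb := by
    intro n hn
    obtain ⟨hd1, hd2⟩ := hdelta n hn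
    set δ : ℝ := α * (lagQ a (n+1) : ℝ) - (lagP a (n+1) : ℝ) with hδ
    have hAAeq : (AA n : ℝ) = (A:ℝ)*δ^2 - (2*(A:ℝ)*α + (B:ℝ))*(lagQ a (n+1):ℝ)*δ := by
      simp only [hAAdef]
      push_cast
      linear_combination ((lagQ a (n+1):ℝ))^2 * hroot'
    rw [hAAeq]
    have e1 : |(A:ℝ)*δ^2 - (2*(A:ℝ)*α + (B:ℝ))*(lagQ a (n+1):ℝ)*δ|
        ≤ |(A:ℝ)| * |δ| ^ 2 + |2*(A:ℝ)*α + (B:ℝ)| * ((lagQ a (n+1):ℝ) * |δ|) := by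
      refine le_trans (abs_sub _ _) ?_
      rw [abs_mul, abs_mul, abs_mul, sq_abs, abs_of_nonneg (hQR0 (n+1))]
      rw [abs_pow, sq_abs]
      apply le_of_eq
      ring
    refine le_trans e1 ?_
    rw [hKb]
    have h0 : (0:ℝ) ≤ |δ| := abs_nonneg δ
    have h1 : |δ| ≤ 1 := hd1
    have h2 : (lagQ a (n+1):ℝ) * |δ| ≤ 1 := by
      have := hd2
      nlinarith [hQR0 (n+1)]
    have h3 := abs_nonneg (A:ℝ)
    have h4 := abs_nonneg (2*(A:ℝ)*α + (B:ℝ))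
    have h5 : (0:ℝ) ≤ (lagQ a (n+1):ℝ) * |δ| := mul_nonneg (hQR0 (n+1)) h0
    have hsq1 : |δ|^2 ≤ 1 := by nlinarith
    have hA1 : |(A:ℝ)| * |δ|^2 ≤ |(A:ℝ)| := mul_le_of_le_one_right h3 hsq1
    have hE : |2*(A:ℝ)*α + (B:ℝ)| * ((lagQ a (n+1):ℝ) * |δ|) ≤ (2* |(A:ℝ)| * |α| + |(B:ℝ)|) * 1 :=
      mul_le_mul habs2 h2 h5 (by positivity)
    linarith
  have hBBbound : ∀ n, 2 ≤ n → |(BB n : ℝ)| ≤ Kb2 := by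
    intro n hn
    obtain ⟨k, rfl⟩ : ∃ k, n = k + 2 := ⟨n-2, by omega⟩
    obtain ⟨hd1, hd2⟩ := hdelta (k+2) (by omega)
    obtain ⟨he1, he2⟩ := hdelta (k+1) (by omega)
    set δ' : ℝ := α * (lagQ a (k+3) : ℝ) - (lagP a (k+3) : ℝ) with hδ'
    set δ : ℝ := α * (lagQ a (k+2) : ℝ) - (lagP a (k+2) : ℝ) with hδ
    have hBBeq : (BB (k+2) : ℝ) = 2*(A:ℝ)*δ*δ'
        - (2*(A:ℝ)*α + (B:ℝ))*((lagQ a (k+2):ℝ)*δ' + (lagQ a (k+3):ℝ)*δ) := by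
      simp only [hBBdef]
      push_cast
      linear_combination (2*(lagQ a (k+2):ℝ)*(lagQ a (k+3):ℝ)) * hroot'
    rw [hBBeq]
    have e1 : |2*(A:ℝ)*δ*δ' - (2*(A:ℝ)*α + (B:ℝ))*((lagQ a (k+2):ℝ)*δ' + (lagQ a (k+3):ℝ)*δ)|
        ≤ 2 * |(A:ℝ)| * (|δ| * |δ'|)
          + |2*(A:ℝ)*α + (B:ℝ)| * |(lagQ a (k+2):ℝ)*δ' + (lagQ a (k+3):ℝ)*δ| := by
      refine le_trans (abs_sub _ _) ?_
      rw [abs_mul, abs_mul, abs_mul, abs_mul, abs_two]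
      apply le_of_eq
      ring
    refine le_trans e1 ?_
    rw [hKb2]
    have hq2 : (lagQ a (k+2):ℝ) ≤ (lagQ a (k+3):ℝ) := hQmono (by omega) (by omega)
    have h2 : |(lagQ a (k+2):ℝ)*δ' + (lagQ a (k+3):ℝ)*δ| ≤ 2 := by
      refine le_trans (abs_add_le _ _) ?_
      rw [abs_mul, abs_mul, abs_of_nonneg (hQR0 (k+2)), abs_of_nonneg (hQR0 (k+3))]
      have hd2' : |δ'| * (lagQ a (k+3):ℝ) ≤ 1 := by
        have h := hd2; norm_num at h; exact h
      have he2' : |δ| * (lagQ a (k+2):ℝ) ≤ 1 := by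
        have h := he2; norm_num at h; exact h
      have hb1' : (lagQ a (k+2):ℝ) * |δ'| ≤ 1 := by
        have h6 : (lagQ a (k+2):ℝ) * |δ'| ≤ (lagQ a (k+3):ℝ) * |δ'| :=
          mul_le_mul_of_nonneg_right hq2 (abs_nonneg _)
        nlinarith
      have hb2' : (lagQ a (k+3):ℝ) * |δ| ≤ 1 := by
        have h := herr (k+1)
        norm_num at h
        rw [← hδ] at h
        rw [mul_comm]
        exact h
      linarith
    have h0 : (0:ℝ) ≤ |δ| := abs_nonneg δ
    have h0' : (0:ℝ) ≤ |δ'| := abs_nonneg δ'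
    have h1 : |δ| ≤ 1 := he1
    have h1' : |δ'| ≤ 1 := hd1
    have h3 := abs_nonneg (A:ℝ)
    have h4 := abs_nonneg (2*(A:ℝ)*α + (B:ℝ))
    have h5 := abs_nonneg ((lagQ a (k+2):ℝ)*δ' + (lagQ a (k+3):ℝ)*δ)
    have hdd : |δ| * |δ'| ≤ 1 := by nlinarith
    have hA1 : 2 * |(A:ℝ)| * (|δ| * |δ'|) ≤ 2 * |(A:ℝ)| := by nlinarith
    have hE : |2*(A:ℝ)*α + (B:ℝ)| * |(lagQ a (k+2):ℝ)*δ' + (lagQ a (k+3):ℝ)*δ|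
        ≤ (2* |(A:ℝ)| * |α| + |(B:ℝ)|) * 2 := mul_le_mul habs2 h2 h5 (by positivity)
    linarith
  have hCCAA : ∀ n, CC (n+1) = AA n := fun n => rfl
  have hCCbound : ∀ n, 2 ≤ n → |(CC n : ℝ)| ≤ Kb := by
    intro n hn
    obtain ⟨k, rfl⟩ : ∃ k, n = k + 1 := ⟨n-1, by omega⟩
    rw [hCCAA k]
    exact hAAbound k (by omega)
  -- AA n is nonzero
  have hAAne : ∀ n, 1 ≤ n → AA n ≠ 0 := by
    intro n hn h0
    have hQ1 : (1:ℝ) ≤ (lagQ a (n+1) : ℝ) := by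
      obtain ⟨k, rfl⟩ : ∃ k, n = k + 1 := ⟨n-1, by omega⟩
      exact hQcast k
    have hQne : (lagQ a (n+1) : ℝ) ≠ 0 := by linarith
    set xq : ℝ := (lagP a (n+1) : ℝ) / (lagQ a (n+1) : ℝ) with hxq
    have h0R : (A:ℝ) * (lagP a (n+1):ℝ)^2 + (B:ℝ) * (lagP a (n+1):ℝ) * (lagQ a (n+1):ℝ)
        + (C0:ℝ) * (lagQ a (n+1):ℝ)^2 = 0 := by
      have : ((AA n : ℤ) : ℝ) = 0 := by rw [h0]; norm_num
      rw [hAAdef] at this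
      push_cast at this
      linarith
    have hq0 : (A:ℝ) * xq^2 + (B:ℝ) * xq + (C0:ℝ) = 0 := by
      rw [hxq]
      field_simp
      linear_combination h0R
    have hfac : (α - xq) * ((A:ℝ)*(α + xq) + (B:ℝ)) = 0 := by
      linear_combination hroot' - hq0
    rcases mul_eq_zero.mp hfac with h | h
    · exact hα' (lagP a (n+1)) (lagQ a (n+1)) (by rw [hxq] at h; linarith [sub_eq_zero.mp h])
    · refine hα' (-(B * lagQ a (n+1) + A * lagP a (n+1))) (A * lagQ a (n+1)) ?_
      have hd : ((A * lagQ a (n+1) : ℤ) : ℝ) ≠ 0 := by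
        push_cast
        exact mul_ne_zero hARne hQne
      rw [eq_div_iff hd]
      push_cast
      rw [hxq] at h
      field_simp at h
      linarith
  -- pigeonhole setup
  set K : ℤ := ⌈Kb⌉ + ⌈Kb2⌉ + 1 with hK
  have hKb0 : (0:ℝ) ≤ Kb := by positivity
  have hKb20 : (0:ℝ) ≤ Kb2 := by positivity
  have hKR : Kb ≤ (K:ℝ) ∧ Kb2 ≤ (K:ℝ) := by
    have h1 := Int.le_ceil Kb
    have h2 := Int.le_ceil Kb2
    have h3 : (0:ℝ) ≤ (⌈Kb⌉:ℝ) := le_trans hKb0 h1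
    have h4 : (0:ℝ) ≤ (⌈Kb2⌉:ℝ) := le_trans hKb20 h2
    constructor <;> (rw [hK]; push_cast; linarith)
  have hmem : ∀ n : ℕ, (AA (n+2), BB (n+2), CC (n+2)) ∈
      Finset.Icc ((-K,-K,-K) : ℤ×ℤ×ℤ) ((K,K,K) : ℤ×ℤ×ℤ) := by
    intro n
    have h1 : |(AA (n+2) : ℝ)| ≤ (K:ℝ) := le_trans (hAAbound (n+2) (by omega)) hKR.1
    have h2 : |(BB (n+2) : ℝ)| ≤ (K:ℝ) := le_trans (hBBbound (n+2) (by omega)) hKR.2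
    have h3 : |(CC (n+2) : ℝ)| ≤ (K:ℝ) := le_trans (hCCbound (n+2) (by omega)) hKR.1
    have h1' : |AA (n+2)| ≤ K := by exact_mod_cast (by rwa [← Int.cast_abs] at h1 : ((|AA (n+2)| : ℤ) : ℝ) ≤ (K:ℝ))
    have h2' : |BB (n+2)| ≤ K := by exact_mod_cast (by rwa [← Int.cast_abs] at h2 : ((|BB (n+2)| : ℤ) : ℝ) ≤ (K:ℝ))
    have h3' : |CC (n+2)| ≤ K := by exact_mod_cast (by rwa [← Int.cast_abs] at h3 : ((|CC (n+2)| : ℤ) : ℝ) ≤ (K:ℝ))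
    rw [Finset.mem_Icc]
    rw [abs_le] at h1' h2' h3'
    constructor
    · exact ⟨h1'.1, h2'.1, h3'.1⟩
    · exact ⟨h1'.2, h2'.2, h3'.2⟩
  set S := Finset.Icc ((-K,-K,-K) : ℤ×ℤ×ℤ) ((K,K,K) : ℤ×ℤ×ℤ) with hS
  set T : ℕ → {x // x ∈ S} := fun n => ⟨(AA (n+2), BB (n+2), CC (n+2)), hmem n⟩ with hT
  obtain ⟨y, hy⟩ := Finite.exists_infinite_fiber T
  have hyinf : (T ⁻¹' {y} : Set ℕ).Infinite := Set.infinite_coe_iff.mp hy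
  obtain ⟨n1, hn1, hn1pos⟩ := hyinf.exists_gt 0
  obtain ⟨n2, hn2, h12⟩ := hyinf.exists_gt n1
  obtain ⟨n3, hn3, h23⟩ := hyinf.exists_gt n2
  have hTeq : ∀ {p q : ℕ}, T p = T q → AA (p+2) = AA (q+2) ∧ BB (p+2) = BB (q+2)
      ∧ CC (p+2) = CC (q+2) := by
    intro p q h
    have := congrArg Subtype.val h
    simp only [hT] at this
    exact ⟨congrArg Prod.fst this, congrArg (fun z => z.2.1) this, congrArg (fun z => z.2.2) this⟩
  have h12' := hTeq ((Set.mem_preimage.mp hn1).trans (Set.mem_preimage.mp hn2).symm)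
  have h13' := hTeq ((Set.mem_preimage.mp hn1).trans (Set.mem_preimage.mp hn3).symm)
  -- three roots of the same quadratic: two must coincide
  have hbeq : ∃ i j : ℕ, i < j ∧ β i = β j := by
    set x1 := β (n1+2) with hx1
    set x2 := β (n2+2) with hx2
    set x3 := β (n3+2) with hx3
    have hr1 := hrooteq (n1+2)
    have hr2 := hrooteq (n2+2)
    have hr3 := hrooteq (n3+2)
    rw [← h12'.1, ← h12'.2.1, ← h12'.2.2] at hr2
    rw [← h13'.1, ← h13'.2.1, ← h13'.2.2] at hr3
    have hAn1 : (AA (n1+2) : ℝ) ≠ 0 := by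
      exact_mod_cast fun h => hAAne (n1+2) (by omega) (by exact_mod_cast h)
    by_cases e12 : x1 = x2
    · exact ⟨n1+2, n2+2, by omega, e12⟩
    by_cases e13 : x1 = x3
    · exact ⟨n1+2, n3+2, by omega, e13⟩
    by_cases e23 : x2 = x3
    · exact ⟨n2+2, n3+2, by omega, e23⟩
    exfalso
    have hf12 : (AA (n1+2):ℝ) * (x1 + x2) + (BB (n1+2):ℝ) = 0 := by
      have hfac : (x1 - x2) * ((AA (n1+2):ℝ) * (x1 + x2) + (BB (n1+2):ℝ)) = 0 := by
        linear_combination hr1 - hr2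
      rcases mul_eq_zero.mp hfac with h | h
      · exact absurd (sub_eq_zero.mp h) e12
      · exact h
    have hf13 : (AA (n1+2):ℝ) * (x1 + x3) + (BB (n1+2):ℝ) = 0 := by
      have hfac : (x1 - x3) * ((AA (n1+2):ℝ) * (x1 + x3) + (BB (n1+2):ℝ)) = 0 := by
        linear_combination hr1 - hr3
      rcases mul_eq_zero.mp hfac with h | h
      · exact absurd (sub_eq_zero.mp h) e13
      · exact h
    have : (AA (n1+2):ℝ) * (x2 - x3) = 0 := by linear_combination hf12 - hf13
    rcases mul_eq_zero.mp this with h | h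
    · exact hAn1 h
    · exact e23 (sub_eq_zero.mp h)
  -- conclude periodicity
  obtain ⟨i, j, hij, hbij⟩ := hbeq
  refine ⟨i, j - i, by omega, ?_⟩
  intro n hn
  have hshift : β n = β (j + (n - i)) := by
    have h := beta_shift i j hbij (n - i)
    rwa [show i + (n - i) = n by omega] at h
  have h2 : a (n + (j - i)) = ⌊β (j + (n - i))⌋ := by
    rw [hfl (n + (j-i)), show n + (j-i) = j + (n-i) by omega]
  rw [h2, ← hshift, ← hfl n]

end CFLag


/-- **Lagrange's theorem on continued fractions.**
Let `α` be an irrational real number and let `a` be the sequence of partial quotients of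
its regular continued fraction expansion, i.e. `a 0 = ⌊α⌋` and
`a (n+1) = ⌊1 / Gⁿ (fract α)⌋` where `G x = fract (1/x)` is the Gauss map.
Then `a` is eventually periodic if and only if `α` is a quadratic irrationality,
i.e. a root of a polynomial of degree 2 with integer coefficients. -/
theorem lagrange_periodicity_of_continued_fractions
    (α : ℝ) (hα : Irrational α) (a : ℕ → ℤ)
    (ha0 : a 0 = ⌊α⌋)
    (ha : ∀ n : ℕ, a (n + 1) = ⌊((fun x : ℝ => Int.fract x⁻¹)^[n] (Int.fract α))⁻¹⌋) :
    (∃ N m : ℕ, 0 < m ∧ ∀ i ≥ N, a (i + m) = a i) ↔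
      ∃ P : Polynomial ℤ, P.degree = 2 ∧ Polynomial.aeval α P = 0 := by
  have hfl := CFLag.a_eq_floor a ha0 ha
  constructor
  · rintro ⟨N, m, hm, hper⟩
    exact CFLag.dirA α hα a hfl N m hm hper
  · rintro ⟨P, hdeg, hroot⟩
    exact CFLag.dirB α hα a hfl P hdeg hroot
end

section
/- Let p be a degree-3 polynomial with integer coefficients, irreducible over ℚ, with (necessarily distinct) roots α, β, γ ∈ ℂ, and let q be a degree-2 polynomial with integer coefficients and nonzero leading coefficient. Then there exists a 3×3 integer matrix M whose characteristic polynomial is irreducible over ℚ such that each of the three vectors ξ = (1, α, q(α)), ν = (1, β, q(β)), μ = (1, γ, q(γ)) is an eigenvector of M. -/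
/-!
Write `p = a X³ + b X² + c X + d` and `q = e X² + f X + g`. For a root `τ` of `p`, expressing
`a e τ • (1, τ, q τ)` coordinatewise as an integer combination of `1, τ, q τ` (reducing `τ³`
with `p τ = 0`) gives one integer matrix `M`, independent of `τ`, having `(1, τ, q τ)` as an
eigenvector for the eigenvalue `a e τ`. Its characteristic polynomial has the roots `a e τ`:
up to the unit `a` it is `p.scaleRoots (a e)`, and rescaling the roots of a polynomial over a
field preserves irreducibility.
-/

open Polynomial Matrix

namespace Polynomial

theorem isUnit_scaleRoots_iff {K : Type*} [Field K] {p : K[X]} {s : K} :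
    IsUnit (p.scaleRoots s) ↔ IsUnit p := by
  rw [isUnit_iff_degree_eq_zero, isUnit_iff_degree_eq_zero, degree_scaleRoots]

theorem Irreducible.scaleRoots {K : Type*} [Field K] {p : K[X]} (hp : Irreducible p) {s : K}
    (hs : s ≠ 0) : Irreducible (p.scaleRoots s) := by
  refine ⟨fun hu => hp.not_isUnit (isUnit_scaleRoots_iff.mp hu), fun g h hgh => ?_⟩
  have hp_eq : p = g.scaleRoots s⁻¹ * h.scaleRoots s⁻¹ := by
    rw [← mul_scaleRoots_of_noZeroDivisors, ← hgh, ← scaleRoots_mul, mul_inv_cancel₀ hs,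
      scaleRoots_one]
  exact (hp.isUnit_or_isUnit hp_eq).imp isUnit_scaleRoots_iff.mp isUnit_scaleRoots_iff.mp

end Polynomial

section CubicConjugateMatrix

variable {R : Type*} [CommRing R]

/-- In the notation `p = a X³ + b X² + c X + d`, `q = e X² + f X + g` this is
`!![0, a e, 0; -a g, -a f, a; e b g - a f g - e² d, e b f - a f² + a e g - e² c, a f - e b]`. -/
def cubicConjugateMatrix (p q : R[X]) : Matrix (Fin 3) (Fin 3) R :=
  !![0, p.coeff 3 * q.coeff 2, 0;
    -(p.coeff 3 * q.coeff 0), -(p.coeff 3 * q.coeff 1), p.coeff 3;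
    q.coeff 2 * p.coeff 2 * q.coeff 0 - p.coeff 3 * q.coeff 1 * q.coeff 0
      - q.coeff 2 ^ 2 * p.coeff 0,
    q.coeff 2 * p.coeff 2 * q.coeff 1 - p.coeff 3 * q.coeff 1 ^ 2
      + p.coeff 3 * q.coeff 2 * q.coeff 0 - q.coeff 2 ^ 2 * p.coeff 1,
    p.coeff 3 * q.coeff 1 - q.coeff 2 * p.coeff 2]

theorem cubicConjugateMatrix_map {S : Type*} [CommRing S] (f : R →+* S) (p q : R[X]) :
    (cubicConjugateMatrix p q).map f = cubicConjugateMatrix (p.map f) (q.map f) := by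
  ext i j
  fin_cases i <;> fin_cases j <;> simp [cubicConjugateMatrix]

theorem cubicConjugateMatrix_mulVec {p q : R[X]} (hp : p.natDegree ≤ 3) (hq : q.natDegree ≤ 2)
    {τ : R} (hτ : p.eval τ = 0) :
    cubicConjugateMatrix p q *ᵥ ![1, τ, q.eval τ] =
      (p.coeff 3 * q.coeff 2 * τ) • ![1, τ, q.eval τ] := by
  rw [eval_eq_sum_range' (Nat.lt_succ_of_le hp)] at hτ
  rw [eval_eq_sum_range' (Nat.lt_succ_of_le hq)]
  simp only [Finset.sum_range_succ, Finset.sum_range_zero] at hτ ⊢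
  ext i
  fin_cases i
  · simp [cubicConjugateMatrix, mulVec, dotProduct, Fin.sum_univ_three]
  · simp [cubicConjugateMatrix, mulVec, dotProduct, Fin.sum_univ_three]
    ring
  · simp [cubicConjugateMatrix, mulVec, dotProduct, Fin.sum_univ_three]
    linear_combination (-q.coeff 2 ^ 2) * hτ

theorem cubicConjugateMatrix_charpoly (p q : R[X]) :
    (cubicConjugateMatrix p q).charpoly = X ^ 3 + C (p.coeff 2 * q.coeff 2) * X ^ 2
      + C (p.coeff 3 * p.coeff 1 * q.coeff 2 ^ 2) * X
      + C (p.coeff 3 ^ 2 * p.coeff 0 * q.coeff 2 ^ 3) := by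
  rw [Matrix.charpoly, Matrix.det_fin_three]
  simp [cubicConjugateMatrix]
  ring

theorem C_mul_cubicConjugateMatrix_charpoly {p : R[X]} (hp : p.natDegree = 3) (q : R[X]) :
    C (p.coeff 3) * (cubicConjugateMatrix p q).charpoly =
      p.scaleRoots (p.coeff 3 * q.coeff 2) := by
  ext n
  rw [cubicConjugateMatrix_charpoly, coeff_scaleRoots, hp]
  simp only [coeff_C_mul, coeff_add, coeff_X_pow, coeff_X, coeff_C]
  rcases n with _ | _ | _ | _ | n <;> simp [coeff_eq_zero_of_natDegree_lt, hp] <;> ring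

end CubicConjugateMatrix

theorem exists_integer_matrix_with_conjugate_eigenvectors_general
    (p q : Polynomial ℤ)
    (hp : p.degree = 3)
    (hirr : Irreducible (p.map (Int.castRingHom ℚ)))
    (α β γ : ℂ)
    (hα : Polynomial.aeval α p = 0) (hβ : Polynomial.aeval β p = 0)
    (hγ : Polynomial.aeval γ p = 0)
    (hq : q.degree = 2) :
    ∃ M : Matrix (Fin 3) (Fin 3) ℤ,
      Irreducible (M.charpoly.map (Int.castRingHom ℚ)) ∧
      ∀ τ ∈ ({α, β, γ} : Set ℂ),
        ![1, τ, Polynomial.aeval τ q] ≠ 0 ∧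
        ∃ lam : ℂ,
          (M.map (Int.cast : ℤ → ℂ)).mulVec ![1, τ, Polynomial.aeval τ q] =
            lam • ![1, τ, Polynomial.aeval τ q] := by
  have hp3 : p.natDegree = 3 := natDegree_eq_of_degree_eq_some hp
  have hq2 : q.natDegree = 2 := natDegree_eq_of_degree_eq_some hq
  have ha : p.coeff 3 ≠ 0 := coeff_ne_zero_of_eq_degree hp
  have he : q.coeff 2 ≠ 0 := coeff_ne_zero_of_eq_degree hq
  refine ⟨cubicConjugateMatrix p q, ?_, fun τ hτ => ⟨fun h => one_ne_zero (congrFun h 0), ?_⟩⟩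
  · have hscaled := hirr.scaleRoots (s := Int.castRingHom ℚ (p.coeff 3 * q.coeff 2))
      (by simp [ha, he])
    rw [← map_scaleRoots _ _ _ (by simp [leadingCoeff, hp3, ha]),
      ← C_mul_cubicConjugateMatrix_charpoly hp3, Polynomial.map_mul, map_C] at hscaled
    exact (irreducible_isUnit_mul (isUnit_C.mpr (by simp [ha]))).mp hscaled
  · have hpτ : (p.map (algebraMap ℤ ℂ)).eval τ = 0 := by
      rw [eval_map_algebraMap]
      rcases hτ with rfl | rfl | rfl <;> assumption
    rw [← eval_map_algebraMap, show (Int.cast : ℤ → ℂ) = algebraMap ℤ ℂ from rfl,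
      cubicConjugateMatrix_map]
    exact ⟨_, cubicConjugateMatrix_mulVec (natDegree_map_le.trans hp3.le)
      (natDegree_map_le.trans hq2.le) hpτ⟩

/-- **Triples of cubic conjugate vectors come from an integer matrix.**
Let `p` be a degree-3 integer polynomial, irreducible over `ℚ`, with (necessarily distinct)
roots `α, β, γ ∈ ℂ`, and let `q` be a degree-2 integer polynomial (its leading coefficient
is nonzero). Then there exists a `3 × 3` integer matrix `M` whose characteristic polynomial
is irreducible over `ℚ` such that each of the vectors `(1, τ, q(τ))` for `τ ∈ {α, β, γ}` is
an eigenvector of `M`. -/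
theorem exists_integer_matrix_with_conjugate_eigenvectors
    (p q : Polynomial ℤ)
    (hp : p.degree = 3)
    (hirr : Irreducible (p.map (Int.castRingHom ℚ)))
    (α β γ : ℂ)
    (hα : Polynomial.aeval α p = 0) (hβ : Polynomial.aeval β p = 0)
    (hγ : Polynomial.aeval γ p = 0)
    (hαβ : α ≠ β) (hαγ : α ≠ γ) (hβγ : β ≠ γ)
    (hq : q.degree = 2) :
    ∃ M : Matrix (Fin 3) (Fin 3) ℤ,
      Irreducible (M.charpoly.map (Int.castRingHom ℚ)) ∧
      ∀ τ ∈ ({α, β, γ} : Set ℂ),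
        ![1, τ, Polynomial.aeval τ q] ≠ 0 ∧
        ∃ lam : ℂ,
          (M.map (Int.cast : ℤ → ℂ)).mulVec ![1, τ, Polynomial.aeval τ q] =
            lam • ![1, τ, Polynomial.aeval τ q] :=
  exists_integer_matrix_with_conjugate_eigenvectors_general p q hp hirr α β γ hα hβ hγ hq
end

section
/- Let ξ be the unique real root of the polynomial x³ + 2x² + x + 4. Define the Jacobi–Perron iteration starting from (x₁, y₁, z₁) = (1, ξ, ξ² + ξ) by (x_{i+1}, y_{i+1}, z_{i+1}) = (y_i, z_i − ⌊z_i/y_i⌋·y_i, x_i − ⌊x_i/y_i⌋·y_i), with i-th element the pair (⌊x_i/y_i⌋, ⌊z_i/y_i⌋). Then the sequence of elements is: (−1, −2), (1, 0), (1, 0), (1, 0), (2, 2), (6, 4) for i = 1, …, 6, and for all i ≥ 7 it is eventually periodic with period 2, namely (⌊x_i/y_i⌋, ⌊z_i/y_i⌋) = (3, 1) for odd i ≥ 7 and (7, 1) for even i ≥ 8. -/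
private lemma floorq (n : ℤ) (x y : ℝ) (hy : y < 0) (h1 : x ≤ n * y) (h2 : (n+1) * y < x) :
    ⌊x / y⌋ = n := by
  rw [Int.floor_eq_iff]
  constructor
  · rw [le_div_iff_of_neg hy]; exact h1
  · rw [div_lt_iff_of_neg hy]; push_cast at h2 ⊢; linarith

private lemma jpb (ξ : ℝ) (hξ : ξ ^ 3 + 2 * ξ ^ 2 + ξ + 4 = 0) : -2.3145963 < ξ ∧ ξ < -2.3145962 := by
  constructor
  · nlinarith [sq_nonneg (ξ + 2.3145963), sq_nonneg (ξ + 1), sq_nonneg ξ]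
  · nlinarith [sq_nonneg (ξ + 2.3145962), sq_nonneg (ξ + 1), sq_nonneg ξ]

private lemma jpy1 (ξ : ℝ) (hξ : ξ ^ 3 + 2 * ξ ^ 2 + ξ + 4 = 0) : (ξ) < 0 := by
  obtain ⟨hl, hu⟩ := jpb ξ hξ
  have hq : (0:ℝ) < (ξ + 2.3145963) * (-2.3145962 - ξ) := by
    apply mul_pos <;> linarith
  nlinarith [hq, sq_nonneg (ξ + 2.3145963), sq_nonneg (ξ + 2.3145962)]

private lemma jpA1 (ξ : ℝ) (hξ : ξ ^ 3 + 2 * ξ ^ 2 + ξ + 4 = 0) : ⌊((1:ℝ)) / (ξ)⌋ = (-1 : ℤ) := by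
  obtain ⟨hl, hu⟩ := jpb ξ hξ
  have hq : (0:ℝ) < (ξ + 2.3145963) * (-2.3145962 - ξ) := by
    apply mul_pos <;> linarith
  apply floorq
  · exact jpy1 ξ hξ
  · push_cast; nlinarith [hq, sq_nonneg (ξ + 2.3145963), sq_nonneg (ξ + 2.3145962)]
  · push_cast; nlinarith [hq, sq_nonneg (ξ + 2.3145963), sq_nonneg (ξ + 2.3145962)]

private lemma jpB1 (ξ : ℝ) (hξ : ξ ^ 3 + 2 * ξ ^ 2 + ξ + 4 = 0) : ⌊(ξ^2+ξ) / (ξ)⌋ = (-2 : ℤ) := by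
  obtain ⟨hl, hu⟩ := jpb ξ hξ
  have hq : (0:ℝ) < (ξ + 2.3145963) * (-2.3145962 - ξ) := by
    apply mul_pos <;> linarith
  apply floorq
  · exact jpy1 ξ hξ
  · push_cast; nlinarith [hq, sq_nonneg (ξ + 2.3145963), sq_nonneg (ξ + 2.3145962)]
  · push_cast; nlinarith [hq, sq_nonneg (ξ + 2.3145963), sq_nonneg (ξ + 2.3145962)]

private lemma jpy2 (ξ : ℝ) (hξ : ξ ^ 3 + 2 * ξ ^ 2 + ξ + 4 = 0) : (3*ξ+ξ^2) < 0 := by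
  obtain ⟨hl, hu⟩ := jpb ξ hξ
  have hq : (0:ℝ) < (ξ + 2.3145963) * (-2.3145962 - ξ) := by
    apply mul_pos <;> linarith
  nlinarith [hq, sq_nonneg (ξ + 2.3145963), sq_nonneg (ξ + 2.3145962)]

private lemma jpA2 (ξ : ℝ) (hξ : ξ ^ 3 + 2 * ξ ^ 2 + ξ + 4 = 0) : ⌊(ξ) / (3*ξ+ξ^2)⌋ = (1 : ℤ) := by
  obtain ⟨hl, hu⟩ := jpb ξ hξ
  have hq : (0:ℝ) < (ξ + 2.3145963) * (-2.3145962 - ξ) := by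
    apply mul_pos <;> linarith
  apply floorq
  · exact jpy2 ξ hξ
  · push_cast; nlinarith [hq, sq_nonneg (ξ + 2.3145963), sq_nonneg (ξ + 2.3145962)]
  · push_cast; nlinarith [hq, sq_nonneg (ξ + 2.3145963), sq_nonneg (ξ + 2.3145962)]

private lemma jpB2 (ξ : ℝ) (hξ : ξ ^ 3 + 2 * ξ ^ 2 + ξ + 4 = 0) : ⌊(1+ξ) / (3*ξ+ξ^2)⌋ = (0 : ℤ) := by
  obtain ⟨hl, hu⟩ := jpb ξ hξ
  have hq : (0:ℝ) < (ξ + 2.3145963) * (-2.3145962 - ξ) := by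
    apply mul_pos <;> linarith
  apply floorq
  · exact jpy2 ξ hξ
  · push_cast; nlinarith [hq, sq_nonneg (ξ + 2.3145963), sq_nonneg (ξ + 2.3145962)]
  · push_cast; nlinarith [hq, sq_nonneg (ξ + 2.3145963), sq_nonneg (ξ + 2.3145962)]

private lemma jpy3 (ξ : ℝ) (hξ : ξ ^ 3 + 2 * ξ ^ 2 + ξ + 4 = 0) : (1+ξ) < 0 := by
  obtain ⟨hl, hu⟩ := jpb ξ hξ
  have hq : (0:ℝ) < (ξ + 2.3145963) * (-2.3145962 - ξ) := by
    apply mul_pos <;> linarith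
  nlinarith [hq, sq_nonneg (ξ + 2.3145963), sq_nonneg (ξ + 2.3145962)]

private lemma jpA3 (ξ : ℝ) (hξ : ξ ^ 3 + 2 * ξ ^ 2 + ξ + 4 = 0) : ⌊(3*ξ+ξ^2) / (1+ξ)⌋ = (1 : ℤ) := by
  obtain ⟨hl, hu⟩ := jpb ξ hξ
  have hq : (0:ℝ) < (ξ + 2.3145963) * (-2.3145962 - ξ) := by
    apply mul_pos <;> linarith
  apply floorq
  · exact jpy3 ξ hξ
  · push_cast; nlinarith [hq, sq_nonneg (ξ + 2.3145963), sq_nonneg (ξ + 2.3145962)]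
  · push_cast; nlinarith [hq, sq_nonneg (ξ + 2.3145963), sq_nonneg (ξ + 2.3145962)]

private lemma jpB3 (ξ : ℝ) (hξ : ξ ^ 3 + 2 * ξ ^ 2 + ξ + 4 = 0) : ⌊(-2*ξ-ξ^2) / (1+ξ)⌋ = (0 : ℤ) := by
  obtain ⟨hl, hu⟩ := jpb ξ hξ
  have hq : (0:ℝ) < (ξ + 2.3145963) * (-2.3145962 - ξ) := by
    apply mul_pos <;> linarith
  apply floorq
  · exact jpy3 ξ hξ
  · push_cast; nlinarith [hq, sq_nonneg (ξ + 2.3145963), sq_nonneg (ξ + 2.3145962)]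
  · push_cast; nlinarith [hq, sq_nonneg (ξ + 2.3145963), sq_nonneg (ξ + 2.3145962)]

private lemma jpy4 (ξ : ℝ) (hξ : ξ ^ 3 + 2 * ξ ^ 2 + ξ + 4 = 0) : (-2*ξ-ξ^2) < 0 := by
  obtain ⟨hl, hu⟩ := jpb ξ hξ
  have hq : (0:ℝ) < (ξ + 2.3145963) * (-2.3145962 - ξ) := by
    apply mul_pos <;> linarith
  nlinarith [hq, sq_nonneg (ξ + 2.3145963), sq_nonneg (ξ + 2.3145962)]

private lemma jpA4 (ξ : ℝ) (hξ : ξ ^ 3 + 2 * ξ ^ 2 + ξ + 4 = 0) : ⌊(1+ξ) / (-2*ξ-ξ^2)⌋ = (1 : ℤ) := by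
  obtain ⟨hl, hu⟩ := jpb ξ hξ
  have hq : (0:ℝ) < (ξ + 2.3145963) * (-2.3145962 - ξ) := by
    apply mul_pos <;> linarith
  apply floorq
  · exact jpy4 ξ hξ
  · push_cast; nlinarith [hq, sq_nonneg (ξ + 2.3145963), sq_nonneg (ξ + 2.3145962)]
  · push_cast; nlinarith [hq, sq_nonneg (ξ + 2.3145963), sq_nonneg (ξ + 2.3145962)]

private lemma jpB4 (ξ : ℝ) (hξ : ξ ^ 3 + 2 * ξ ^ 2 + ξ + 4 = 0) : ⌊(-1+2*ξ+ξ^2) / (-2*ξ-ξ^2)⌋ = (0 : ℤ) := by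
  obtain ⟨hl, hu⟩ := jpb ξ hξ
  have hq : (0:ℝ) < (ξ + 2.3145963) * (-2.3145962 - ξ) := by
    apply mul_pos <;> linarith
  apply floorq
  · exact jpy4 ξ hξ
  · push_cast; nlinarith [hq, sq_nonneg (ξ + 2.3145963), sq_nonneg (ξ + 2.3145962)]
  · push_cast; nlinarith [hq, sq_nonneg (ξ + 2.3145963), sq_nonneg (ξ + 2.3145962)]

private lemma jpy5 (ξ : ℝ) (hξ : ξ ^ 3 + 2 * ξ ^ 2 + ξ + 4 = 0) : (-1+2*ξ+ξ^2) < 0 := by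
  obtain ⟨hl, hu⟩ := jpb ξ hξ
  have hq : (0:ℝ) < (ξ + 2.3145963) * (-2.3145962 - ξ) := by
    apply mul_pos <;> linarith
  nlinarith [hq, sq_nonneg (ξ + 2.3145963), sq_nonneg (ξ + 2.3145962)]

private lemma jpA5 (ξ : ℝ) (hξ : ξ ^ 3 + 2 * ξ ^ 2 + ξ + 4 = 0) : ⌊(-2*ξ-ξ^2) / (-1+2*ξ+ξ^2)⌋ = (2 : ℤ) := by
  obtain ⟨hl, hu⟩ := jpb ξ hξ
  have hq : (0:ℝ) < (ξ + 2.3145963) * (-2.3145962 - ξ) := by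
    apply mul_pos <;> linarith
  apply floorq
  · exact jpy5 ξ hξ
  · push_cast; nlinarith [hq, sq_nonneg (ξ + 2.3145963), sq_nonneg (ξ + 2.3145962)]
  · push_cast; nlinarith [hq, sq_nonneg (ξ + 2.3145963), sq_nonneg (ξ + 2.3145962)]

private lemma jpB5 (ξ : ℝ) (hξ : ξ ^ 3 + 2 * ξ ^ 2 + ξ + 4 = 0) : ⌊(1+3*ξ+ξ^2) / (-1+2*ξ+ξ^2)⌋ = (2 : ℤ) := by
  obtain ⟨hl, hu⟩ := jpb ξ hξ
  have hq : (0:ℝ) < (ξ + 2.3145963) * (-2.3145962 - ξ) := by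
    apply mul_pos <;> linarith
  apply floorq
  · exact jpy5 ξ hξ
  · push_cast; nlinarith [hq, sq_nonneg (ξ + 2.3145963), sq_nonneg (ξ + 2.3145962)]
  · push_cast; nlinarith [hq, sq_nonneg (ξ + 2.3145963), sq_nonneg (ξ + 2.3145962)]

private lemma jpy6 (ξ : ℝ) (hξ : ξ ^ 3 + 2 * ξ ^ 2 + ξ + 4 = 0) : (3-ξ-ξ^2) < 0 := by
  obtain ⟨hl, hu⟩ := jpb ξ hξ
  have hq : (0:ℝ) < (ξ + 2.3145963) * (-2.3145962 - ξ) := by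
    apply mul_pos <;> linarith
  nlinarith [hq, sq_nonneg (ξ + 2.3145963), sq_nonneg (ξ + 2.3145962)]

private lemma jpA6 (ξ : ℝ) (hξ : ξ ^ 3 + 2 * ξ ^ 2 + ξ + 4 = 0) : ⌊(-1+2*ξ+ξ^2) / (3-ξ-ξ^2)⌋ = (6 : ℤ) := by
  obtain ⟨hl, hu⟩ := jpb ξ hξ
  have hq : (0:ℝ) < (ξ + 2.3145963) * (-2.3145962 - ξ) := by
    apply mul_pos <;> linarith
  apply floorq
  · exact jpy6 ξ hξ
  · push_cast; nlinarith [hq, sq_nonneg (ξ + 2.3145963), sq_nonneg (ξ + 2.3145962)]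
  · push_cast; nlinarith [hq, sq_nonneg (ξ + 2.3145963), sq_nonneg (ξ + 2.3145962)]

private lemma jpB6 (ξ : ℝ) (hξ : ξ ^ 3 + 2 * ξ ^ 2 + ξ + 4 = 0) : ⌊(2-6*ξ-3*ξ^2) / (3-ξ-ξ^2)⌋ = (4 : ℤ) := by
  obtain ⟨hl, hu⟩ := jpb ξ hξ
  have hq : (0:ℝ) < (ξ + 2.3145963) * (-2.3145962 - ξ) := by
    apply mul_pos <;> linarith
  apply floorq
  · exact jpy6 ξ hξ
  · push_cast; nlinarith [hq, sq_nonneg (ξ + 2.3145963), sq_nonneg (ξ + 2.3145962)]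
  · push_cast; nlinarith [hq, sq_nonneg (ξ + 2.3145963), sq_nonneg (ξ + 2.3145962)]

private lemma jpy7 (ξ : ℝ) (hξ : ξ ^ 3 + 2 * ξ ^ 2 + ξ + 4 = 0) : (-10-2*ξ+ξ^2) < 0 := by
  obtain ⟨hl, hu⟩ := jpb ξ hξ
  have hq : (0:ℝ) < (ξ + 2.3145963) * (-2.3145962 - ξ) := by
    apply mul_pos <;> linarith
  nlinarith [hq, sq_nonneg (ξ + 2.3145963), sq_nonneg (ξ + 2.3145962)]

private lemma jpA7 (ξ : ℝ) (hξ : ξ ^ 3 + 2 * ξ ^ 2 + ξ + 4 = 0) : ⌊(3-ξ-ξ^2) / (-10-2*ξ+ξ^2)⌋ = (3 : ℤ) := by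
  obtain ⟨hl, hu⟩ := jpb ξ hξ
  have hq : (0:ℝ) < (ξ + 2.3145963) * (-2.3145962 - ξ) := by
    apply mul_pos <;> linarith
  apply floorq
  · exact jpy7 ξ hξ
  · push_cast; nlinarith [hq, sq_nonneg (ξ + 2.3145963), sq_nonneg (ξ + 2.3145962)]
  · push_cast; nlinarith [hq, sq_nonneg (ξ + 2.3145963), sq_nonneg (ξ + 2.3145962)]

private lemma jpB7 (ξ : ℝ) (hξ : ξ ^ 3 + 2 * ξ ^ 2 + ξ + 4 = 0) : ⌊(-19+8*ξ+7*ξ^2) / (-10-2*ξ+ξ^2)⌋ = (1 : ℤ) := by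
  obtain ⟨hl, hu⟩ := jpb ξ hξ
  have hq : (0:ℝ) < (ξ + 2.3145963) * (-2.3145962 - ξ) := by
    apply mul_pos <;> linarith
  apply floorq
  · exact jpy7 ξ hξ
  · push_cast; nlinarith [hq, sq_nonneg (ξ + 2.3145963), sq_nonneg (ξ + 2.3145962)]
  · push_cast; nlinarith [hq, sq_nonneg (ξ + 2.3145963), sq_nonneg (ξ + 2.3145962)]

private lemma jpy8 (ξ : ℝ) (hξ : ξ ^ 3 + 2 * ξ ^ 2 + ξ + 4 = 0) : (-9+10*ξ+6*ξ^2) < 0 := by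
  obtain ⟨hl, hu⟩ := jpb ξ hξ
  have hq : (0:ℝ) < (ξ + 2.3145963) * (-2.3145962 - ξ) := by
    apply mul_pos <;> linarith
  nlinarith [hq, sq_nonneg (ξ + 2.3145963), sq_nonneg (ξ + 2.3145962)]

private lemma jpA8 (ξ : ℝ) (hξ : ξ ^ 3 + 2 * ξ ^ 2 + ξ + 4 = 0) : ⌊(-10-2*ξ+ξ^2) / (-9+10*ξ+6*ξ^2)⌋ = (7 : ℤ) := by
  obtain ⟨hl, hu⟩ := jpb ξ hξ
  have hq : (0:ℝ) < (ξ + 2.3145963) * (-2.3145962 - ξ) := by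
    apply mul_pos <;> linarith
  apply floorq
  · exact jpy8 ξ hξ
  · push_cast; nlinarith [hq, sq_nonneg (ξ + 2.3145963), sq_nonneg (ξ + 2.3145962)]
  · push_cast; nlinarith [hq, sq_nonneg (ξ + 2.3145963), sq_nonneg (ξ + 2.3145962)]

private lemma jpB8 (ξ : ℝ) (hξ : ξ ^ 3 + 2 * ξ ^ 2 + ξ + 4 = 0) : ⌊(33+5*ξ-4*ξ^2) / (-9+10*ξ+6*ξ^2)⌋ = (1 : ℤ) := by
  obtain ⟨hl, hu⟩ := jpb ξ hξ
  have hq : (0:ℝ) < (ξ + 2.3145963) * (-2.3145962 - ξ) := by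
    apply mul_pos <;> linarith
  apply floorq
  · exact jpy8 ξ hξ
  · push_cast; nlinarith [hq, sq_nonneg (ξ + 2.3145963), sq_nonneg (ξ + 2.3145962)]
  · push_cast; nlinarith [hq, sq_nonneg (ξ + 2.3145963), sq_nonneg (ξ + 2.3145962)]

private lemma jpc (ξ : ℝ) (hξ : ξ ^ 3 + 2 * ξ ^ 2 + ξ + 4 = 0) : (0:ℝ) < ξ^2+ξ-3 := by
  obtain ⟨hl, hu⟩ := jpb ξ hξ
  have hq : (0:ℝ) < (ξ + 2.3145963) * (-2.3145962 - ξ) := by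
    apply mul_pos <;> linarith
  nlinarith [hq, sq_nonneg (ξ + 2.3145963), sq_nonneg (ξ + 2.3145962)]

set_option maxHeartbeats 1000000 in
/-- **Periodicity of the Jacobi–Perron algorithm for the vector `(1, ξ, ξ² + ξ)`.**
Let `ξ` be the (unique) real root of `x³ + 2x² + x + 4`, and let `f` be the Jacobi–Perron
iteration starting from `f 1 = (1, ξ, ξ² + ξ)` with step
`(x, y, z) ↦ (y, z - ⌊z/y⌋·y, x - ⌊x/y⌋·y)`, the `i`-th element being the pair
`(a i, b i) = (⌊xᵢ/yᵢ⌋, ⌊zᵢ/yᵢ⌋)`. Then the elements for `i = 1, …, 6` are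
`(-1,-2), (1,0), (1,0), (1,0), (2,2), (6,4)`, and from `i = 7` on the sequence is periodic
with period 2: the element is `(3,1)` for odd `i ≥ 7` and `(7,1)` for even `i ≥ 8`. -/
theorem jacobi_perron_periodic_example
    (ξ : ℝ) (hξ : ξ ^ 3 + 2 * ξ ^ 2 + ξ + 4 = 0)
    (f : ℕ → ℝ × ℝ × ℝ)
    (hf1 : f 1 = (1, ξ, ξ ^ 2 + ξ))
    (hstep : ∀ i ≥ 1, f (i + 1) =
      ((f i).2.1,
       (f i).2.2 - ⌊(f i).2.2 / (f i).2.1⌋ * (f i).2.1,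
       (f i).1 - ⌊(f i).1 / (f i).2.1⌋ * (f i).2.1))
    (a b : ℕ → ℤ)
    (ha : ∀ i, a i = ⌊(f i).1 / (f i).2.1⌋)
    (hb : ∀ i, b i = ⌊(f i).2.2 / (f i).2.1⌋) :
    (a 1, b 1) = (-1, -2) ∧ (a 2, b 2) = (1, 0) ∧ (a 3, b 3) = (1, 0) ∧
    (a 4, b 4) = (1, 0) ∧ (a 5, b 5) = (2, 2) ∧ (a 6, b 6) = (6, 4) ∧
    (∀ i ≥ 7, Odd i → (a i, b i) = (3, 1)) ∧
    (∀ i ≥ 8, Even i → (a i, b i) = (7, 1)) := by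
  have e11 : (f 1).1 = (1:ℝ) := by rw [hf1]
  have e12 : (f 1).2.1 = ξ := by rw [hf1]
  have e13 : (f 1).2.2 = ξ^2+ξ := by rw [hf1]
  have hA1 := jpA1 ξ hξ
  have hB1 := jpB1 ξ hξ
  have hf2 : f 2 = ((ξ), (3*ξ+ξ^2), (1+ξ)) := by
    have h := hstep 1 (by norm_num)
    rw [e11, e12, e13, hA1, hB1] at h
    refine Eq.trans h ?_
    rw [Prod.mk.injEq, Prod.mk.injEq]
    exact ⟨by push_cast; ring, by push_cast; ring, by push_cast; ring⟩
  have e21 : (f 2).1 = (ξ) := by rw [hf2]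
  have e22 : (f 2).2.1 = (3*ξ+ξ^2) := by rw [hf2]
  have e23 : (f 2).2.2 = (1+ξ) := by rw [hf2]
  have hA2 := jpA2 ξ hξ
  have hB2 := jpB2 ξ hξ
  have hf3 : f 3 = ((3*ξ+ξ^2), (1+ξ), (-2*ξ-ξ^2)) := by
    have h := hstep 2 (by norm_num)
    rw [e21, e22, e23, hA2, hB2] at h
    refine Eq.trans h ?_
    rw [Prod.mk.injEq, Prod.mk.injEq]
    exact ⟨by push_cast; ring, by push_cast; ring, by push_cast; ring⟩
  have e31 : (f 3).1 = (3*ξ+ξ^2) := by rw [hf3]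
  have e32 : (f 3).2.1 = (1+ξ) := by rw [hf3]
  have e33 : (f 3).2.2 = (-2*ξ-ξ^2) := by rw [hf3]
  have hA3 := jpA3 ξ hξ
  have hB3 := jpB3 ξ hξ
  have hf4 : f 4 = ((1+ξ), (-2*ξ-ξ^2), (-1+2*ξ+ξ^2)) := by
    have h := hstep 3 (by norm_num)
    rw [e31, e32, e33, hA3, hB3] at h
    refine Eq.trans h ?_
    rw [Prod.mk.injEq, Prod.mk.injEq]
    exact ⟨by push_cast; ring, by push_cast; ring, by push_cast; ring⟩
  have e41 : (f 4).1 = (1+ξ) := by rw [hf4]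
  have e42 : (f 4).2.1 = (-2*ξ-ξ^2) := by rw [hf4]
  have e43 : (f 4).2.2 = (-1+2*ξ+ξ^2) := by rw [hf4]
  have hA4 := jpA4 ξ hξ
  have hB4 := jpB4 ξ hξ
  have hf5 : f 5 = ((-2*ξ-ξ^2), (-1+2*ξ+ξ^2), (1+3*ξ+ξ^2)) := by
    have h := hstep 4 (by norm_num)
    rw [e41, e42, e43, hA4, hB4] at h
    refine Eq.trans h ?_
    rw [Prod.mk.injEq, Prod.mk.injEq]
    exact ⟨by push_cast; ring, by push_cast; ring, by push_cast; ring⟩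
  have e51 : (f 5).1 = (-2*ξ-ξ^2) := by rw [hf5]
  have e52 : (f 5).2.1 = (-1+2*ξ+ξ^2) := by rw [hf5]
  have e53 : (f 5).2.2 = (1+3*ξ+ξ^2) := by rw [hf5]
  have hA5 := jpA5 ξ hξ
  have hB5 := jpB5 ξ hξ
  have hf6 : f 6 = ((-1+2*ξ+ξ^2), (3-ξ-ξ^2), (2-6*ξ-3*ξ^2)) := by
    have h := hstep 5 (by norm_num)
    rw [e51, e52, e53, hA5, hB5] at h
    refine Eq.trans h ?_
    rw [Prod.mk.injEq, Prod.mk.injEq]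
    exact ⟨by push_cast; ring, by push_cast; ring, by push_cast; ring⟩
  have e61 : (f 6).1 = (-1+2*ξ+ξ^2) := by rw [hf6]
  have e62 : (f 6).2.1 = (3-ξ-ξ^2) := by rw [hf6]
  have e63 : (f 6).2.2 = (2-6*ξ-3*ξ^2) := by rw [hf6]
  have hA6 := jpA6 ξ hξ
  have hB6 := jpB6 ξ hξ
  have hf7 : f 7 = ((3-ξ-ξ^2), (-10-2*ξ+ξ^2), (-19+8*ξ+7*ξ^2)) := by
    have h := hstep 6 (by norm_num)
    rw [e61, e62, e63, hA6, hB6] at h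
    refine Eq.trans h ?_
    rw [Prod.mk.injEq, Prod.mk.injEq]
    exact ⟨by push_cast; ring, by push_cast; ring, by push_cast; ring⟩
  have e71 : (f 7).1 = (3-ξ-ξ^2) := by rw [hf7]
  have e72 : (f 7).2.1 = (-10-2*ξ+ξ^2) := by rw [hf7]
  have e73 : (f 7).2.2 = (-19+8*ξ+7*ξ^2) := by rw [hf7]
  have hA7 := jpA7 ξ hξ
  have hB7 := jpB7 ξ hξ
  have hf8 : f 8 = ((-10-2*ξ+ξ^2), (-9+10*ξ+6*ξ^2), (33+5*ξ-4*ξ^2)) := by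
    have h := hstep 7 (by norm_num)
    rw [e71, e72, e73, hA7, hB7] at h
    refine Eq.trans h ?_
    rw [Prod.mk.injEq, Prod.mk.injEq]
    exact ⟨by push_cast; ring, by push_cast; ring, by push_cast; ring⟩
  have e81 : (f 8).1 = (-10-2*ξ+ξ^2) := by rw [hf8]
  have e82 : (f 8).2.1 = (-9+10*ξ+6*ξ^2) := by rw [hf8]
  have e83 : (f 8).2.2 = (33+5*ξ-4*ξ^2) := by rw [hf8]
  have hA8 := jpA8 ξ hξ
  have hB8 := jpB8 ξ hξ
  have hc := jpc ξ hξ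
  have step78 : ∀ m ≥ 1, ∀ t : ℝ, 0 < t →
      f m = (t*(3-ξ-ξ^2), t*(-10-2*ξ+ξ^2), t*(-19+8*ξ+7*ξ^2)) →
      f (m+1) = (t*(-10-2*ξ+ξ^2), t*(-9+10*ξ+6*ξ^2), t*(33+5*ξ-4*ξ^2)) := by
    intro m hm t ht hfm
    have d1 : (f m).1 / (f m).2.1 = (3-ξ-ξ^2) / (-10-2*ξ+ξ^2) := by
      rw [hfm]; exact mul_div_mul_left _ _ ht.ne'
    have d2 : (f m).2.2 / (f m).2.1 = (-19+8*ξ+7*ξ^2) / (-10-2*ξ+ξ^2) := by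
      rw [hfm]; exact mul_div_mul_left _ _ ht.ne'
    have em1 : (f m).1 = t*(3-ξ-ξ^2) := by rw [hfm]
    have em2 : (f m).2.1 = t*(-10-2*ξ+ξ^2) := by rw [hfm]
    have em3 : (f m).2.2 = t*(-19+8*ξ+7*ξ^2) := by rw [hfm]
    rw [hstep m hm, d1, d2, hA7, hB7, em1, em2, em3]
    rw [Prod.mk.injEq, Prod.mk.injEq]
    exact ⟨rfl, by push_cast; ring, by push_cast; ring⟩
  have step89 : ∀ m ≥ 1, ∀ t : ℝ, 0 < t →
      f m = (t*(-10-2*ξ+ξ^2), t*(-9+10*ξ+6*ξ^2), t*(33+5*ξ-4*ξ^2)) →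
      f (m+1) = ((t*(ξ^2+ξ-3))*(3-ξ-ξ^2), (t*(ξ^2+ξ-3))*(-10-2*ξ+ξ^2),
        (t*(ξ^2+ξ-3))*(-19+8*ξ+7*ξ^2)) := by
    intro m hm t ht hfm
    have d1 : (f m).1 / (f m).2.1 = (-10-2*ξ+ξ^2) / (-9+10*ξ+6*ξ^2) := by
      rw [hfm]; exact mul_div_mul_left _ _ ht.ne'
    have d2 : (f m).2.2 / (f m).2.1 = (33+5*ξ-4*ξ^2) / (-9+10*ξ+6*ξ^2) := by
      rw [hfm]; exact mul_div_mul_left _ _ ht.ne'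
    have em1 : (f m).1 = t*(-10-2*ξ+ξ^2) := by rw [hfm]
    have em2 : (f m).2.1 = t*(-9+10*ξ+6*ξ^2) := by rw [hfm]
    have em3 : (f m).2.2 = t*(33+5*ξ-4*ξ^2) := by rw [hfm]
    rw [hstep m hm, d1, d2, hA8, hB8, em1, em2, em3]
    rw [Prod.mk.injEq, Prod.mk.injEq]
    exact ⟨by linear_combination (t*ξ) * hξ,
      by push_cast; linear_combination (t*(3-ξ)) * hξ,
      by push_cast; linear_combination (t*(-1-7*ξ)) * hξ⟩
  have key : ∀ k : ℕ, ∃ t : ℝ, 0 < t ∧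
      f (7+2*k) = (t*(3-ξ-ξ^2), t*(-10-2*ξ+ξ^2), t*(-19+8*ξ+7*ξ^2)) := by
    intro k
    induction k with
    | zero => exact ⟨1, one_pos, by norm_num [hf7]⟩
    | succ n ih =>
      obtain ⟨t, ht, h7⟩ := ih
      have h8 := step78 (7+2*n) (by omega) t ht h7
      have h9 := step89 (7+2*n+1) (by omega) t ht h8
      refine ⟨t*(ξ^2+ξ-3), mul_pos ht hc, ?_⟩
      rw [(by omega : 7+2*(n+1) = 7+2*n+1+1)]
      exact h9
  refine ⟨?_, ?_, ?_, ?_, ?_, ?_, ?_, ?_⟩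
  · rw [ha 1, hb 1, e11, e12, e13, hA1, hB1]
  · rw [ha 2, hb 2, e21, e22, e23, hA2, hB2]
  · rw [ha 3, hb 3, e31, e32, e33, hA3, hB3]
  · rw [ha 4, hb 4, e41, e42, e43, hA4, hB4]
  · rw [ha 5, hb 5, e51, e52, e53, hA5, hB5]
  · rw [ha 6, hb 6, e61, e62, e63, hA6, hB6]
  · intro i hi hodd
    obtain ⟨m, hm⟩ := hodd
    obtain ⟨t, ht, h7⟩ := key (m - 3)
    have hik : i = 7 + 2*(m-3) := by omega
    subst hik
    have d1 : (f (7+2*(m-3))).1 / (f (7+2*(m-3))).2.1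
        = (3-ξ-ξ^2) / (-10-2*ξ+ξ^2) := by
      rw [h7]; exact mul_div_mul_left _ _ ht.ne'
    have d2 : (f (7+2*(m-3))).2.2 / (f (7+2*(m-3))).2.1
        = (-19+8*ξ+7*ξ^2) / (-10-2*ξ+ξ^2) := by
      rw [h7]; exact mul_div_mul_left _ _ ht.ne'
    rw [ha, hb, d1, d2, hA7, hB7]
  · intro i hi heven
    obtain ⟨m, hm⟩ := heven
    obtain ⟨t, ht, h7⟩ := key (m - 4)
    have h8 := step78 (7+2*(m-4)) (by omega) t ht h7
    have hik : i = 7 + 2*(m-4) + 1 := by omega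
    subst hik
    have d1 : (f (7+2*(m-4)+1)).1 / (f (7+2*(m-4)+1)).2.1
        = (-10-2*ξ+ξ^2) / (-9+10*ξ+6*ξ^2) := by
      rw [h8]; exact mul_div_mul_left _ _ ht.ne'
    have d2 : (f (7+2*(m-4)+1)).2.2 / (f (7+2*(m-4)+1)).2.1
        = (33+5*ξ-4*ξ^2) / (-9+10*ξ+6*ξ^2) := by
      rw [h8]; exact mul_div_mul_left _ _ ht.ne'
    rw [ha, hb, d1, d2, hA8, hB8]
end

section
/- Let ξ be the unique real root of the polynomial x³ + 2x² + x + 4, and let M be the integer matrix with rows (5, −4, 3), (−12, 9, −7), (16, −12, 9). Then M has determinant 1 and the vector (1, ξ, ξ² + ξ) is an eigenvector of M; explicitly, M·(1, ξ, ξ² + ξ)ᵀ = λ·(1, ξ, ξ² + ξ)ᵀ with λ = 3ξ² − ξ + 5. -/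
/-! Row by row, `M v - (3ξ² - ξ + 5) v` equals `(0, -3, -(3ξ - 4)) · (ξ³ + 2ξ² + ξ + 4)` for
`v = (1, ξ, ξ² + ξ)`, so the eigenvector equation holds in any commutative ring in which `ξ` is a
root of the cubic. -/

theorem det_five_neg_four_three_eq_one :
    (!![5, -4, 3; -12, 9, -7; 16, -12, 9] : Matrix (Fin 3) (Fin 3) ℤ).det = 1 := by
  decide

theorem mulVec_eq_smul_of_cubic_root {R : Type*} [CommRing R] {x : R}
    (hx : x ^ 3 + 2 * x ^ 2 + x + 4 = 0) :
    ((!![5, -4, 3; -12, 9, -7; 16, -12, 9] : Matrix (Fin 3) (Fin 3) ℤ).map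
        (Int.cast : ℤ → R)).mulVec ![1, x, x ^ 2 + x] = (3 * x ^ 2 - x + 5) • ![1, x, x ^ 2 + x] := by
  ext i
  fin_cases i <;>
    simp only [Fin.zero_eta, Fin.mk_one, Fin.reduceFinMk, Matrix.mulVec, Matrix.vec3_dotProduct,
      Matrix.map_apply, Matrix.of_apply, Matrix.cons_val, Int.cast_neg, Int.cast_ofNat, Pi.smul_apply,
      smul_eq_mul]
  · ring
  · linear_combination -3 * hx
  · linear_combination -(3 * x - 4) * hx

/-- Let `ξ` be the (unique) real root of `x³ + 2x² + x + 4`, and let `M` be the integer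
matrix with rows `(5, -4, 3)`, `(-12, 9, -7)`, `(16, -12, 9)`. Then `det M = 1` and
`(1, ξ, ξ² + ξ)` is an eigenvector of `M` with eigenvalue `λ = 3ξ² - ξ + 5`. -/
theorem matrix_with_eigenvector_one_xi_xisq_plus_xi
    (ξ : ℝ) (hξ : ξ ^ 3 + 2 * ξ ^ 2 + ξ + 4 = 0)
    (M : Matrix (Fin 3) (Fin 3) ℤ)
    (hM : M = !![5, -4, 3; -12, 9, -7; 16, -12, 9]) :
    M.det = 1 ∧
    ![(1 : ℝ), ξ, ξ ^ 2 + ξ] ≠ 0 ∧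
    (M.map (Int.cast : ℤ → ℝ)).mulVec ![1, ξ, ξ ^ 2 + ξ] =
      (3 * ξ ^ 2 - ξ + 5) • ![1, ξ, ξ ^ 2 + ξ] := by
  subst hM
  exact ⟨det_five_neg_four_three_eq_one, fun h ↦ one_ne_zero (congrFun h 0),
    mulVec_eq_smul_of_cubic_root hξ⟩
end

section
/- Let α be any root of the polynomial 2x³ − 4x² − 7x − 2, and let A, B, C be the 3×3 integer matrices with rows ((55, 210, 176), (176, 671, 562), (562, 2143, 1795)), ((−497, −1122, 400), (400, 903, −322), (−322, −727, 259)), and ((185, 172, −72), (−72, −67, 28), (28, 26, −11)) respectively. Then the vector (1, α, α²) is a common eigenvector of A, B, and C; in particular the matrices A, B, C pairwise commute. -/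
namespace Matrix

variable {R : Type*} [CommRing R]

theorem vecCons_one_ne_zero [Nontrivial R] {n : ℕ} (v : Fin n → R) : vecCons 1 v ≠ 0 :=
  fun h => one_ne_zero (congrFun h 0)

theorem mulVec_powers_eq_smul (M : Matrix (Fin 3) (Fin 3) R) (α : R)
    (h₁ : M 1 0 + M 1 1 * α + M 1 2 * α ^ 2 = (M 0 0 + M 0 1 * α + M 0 2 * α ^ 2) * α)
    (h₂ : M 2 0 + M 2 1 * α + M 2 2 * α ^ 2 = (M 0 0 + M 0 1 * α + M 0 2 * α ^ 2) * α ^ 2) :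
    M *ᵥ ![1, α, α ^ 2] = (M 0 0 + M 0 1 * α + M 0 2 * α ^ 2) • ![1, α, α ^ 2] := by
  ext i
  fin_cases i <;> simp [mulVec, dotProduct, Fin.sum_univ_three, h₁, h₂]

end Matrix

open Matrix

/-- Let `α` be any root of `2x³ - 4x² - 7x - 2` and let `A`, `B`, `C` be the `3 × 3` integer
matrices below. Then the vector `(1, α, α²)` is a common eigenvector of `A`, `B` and `C`;
in particular the matrices `A`, `B`, `C` pairwise commute. -/
theorem common_eigenvector_and_commuting_matrices
    (α : ℂ) (hα : 2 * α ^ 3 - 4 * α ^ 2 - 7 * α - 2 = 0)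
    (A B C : Matrix (Fin 3) (Fin 3) ℤ)
    (hA : A = !![55, 210, 176; 176, 671, 562; 562, 2143, 1795])
    (hB : B = !![-497, -1122, 400; 400, 903, -322; -322, -727, 259])
    (hC : C = !![185, 172, -72; -72, -67, 28; 28, 26, -11]) :
    (![(1 : ℂ), α, α ^ 2] ≠ 0 ∧
      (∃ lam : ℂ, (A.map (Int.cast : ℤ → ℂ)).mulVec ![1, α, α ^ 2] = lam • ![1, α, α ^ 2]) ∧
      (∃ lam : ℂ, (B.map (Int.cast : ℤ → ℂ)).mulVec ![1, α, α ^ 2] = lam • ![1, α, α ^ 2]) ∧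
      (∃ lam : ℂ, (C.map (Int.cast : ℤ → ℂ)).mulVec ![1, α, α ^ 2] = lam • ![1, α, α ^ 2])) ∧
    A * B = B * A ∧ A * C = C * A ∧ B * C = C * B := by
  subst hA hB hC
  refine ⟨⟨vecCons_one_ne_zero _, ⟨_, mulVec_powers_eq_smul _ _ ?_ ?_⟩,
    ⟨_, mulVec_powers_eq_smul _ _ ?_ ?_⟩, ⟨_, mulVec_powers_eq_smul _ _ ?_ ?_⟩⟩,
    by decide, by decide, by decide⟩
  all_goals
    simp only [map_apply, of_apply, cons_val', cons_val_zero, cons_val_one, cons_val,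
      cons_val_fin_one, Int.cast_ofNat, Int.cast_neg]
  · linear_combination (-88 : ℂ) * hα
  · linear_combination (-281 - 88 * α) * hα
  · linear_combination (-200 : ℂ) * hα
  · linear_combination (161 - 200 * α) * hα
  · linear_combination (36 : ℂ) * hα
  · linear_combination (-14 + 36 * α) * hα
end
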